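/- arXiv:1412.0379 — 7 statements merged into one kernel-verified Lean document; each statement's English description precedes it below -/
import Mathlib

section
/- Let h: ℝ^m → ℝ be a bounded measurable kernel and θ = E[h(Y₁,...,Y_m)] for independent copies Y₁,...,Y_m of X₁. Define g₁(x) = E[h(x, Y₂,...,Y_m)] - θ. If h satisfies the variation condition with constant L, then g₁ also satisfies the variation condition with the same constant L, i.e., E[sup_{|x - X₁'| ≤ ε} |g₁(x) - g₁(X₁')|] ≤ Lε for all sufficiently small ε > 0. -/
/-!
Since `g₁ x - g₁ y` is an integral over the last `m` coordinates, `|g₁ x - g₁ y|` for `|x - y| < a`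
is bounded by the integral of the oscillation of `h` on the `a`-ball around `(y, Y₁, …, Y_m)`; by
independence, integrating this over `y = Y₀` gives the expected oscillation of `h` around
`(Y₀, …, Y_m)`.

The subtlety is measurability: the closed-ball supremum `varSup h r` need not be measurable, and
the variation hypothesis says nothing about a non-integrable integrand. The open-ball oscillation
`ballOsc h r` is measurable and monotone in `r`, and `ballOsc h r ≤ varSup h r ≤ ballOsc h u` for
`r < u`. At each of the (all but countably many) radii where `r ↦ 𝔼[ballOsc h r (Y)]` is
right-continuous, `varSup h r (Y)` is therefore a.e. equal to `ballOsc h r (Y)`, and the hypothesis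
applies. Letting such radii decrease to `ε` gives the bound `L ε`.
-/

open MeasureTheory ProbabilityTheory

/-- The supremum of `|h x - h p|` over the closed `ε`-ball around `p`. -/
noncomputable def varSup {m : ℕ} (h : EuclideanSpace ℝ (Fin m) → ℝ) (ε : ℝ)
    (p : EuclideanSpace ℝ (Fin m)) : ℝ :=
  ⨆ x : {x : EuclideanSpace ℝ (Fin m) // dist x p ≤ ε}, |h x.1 - h p|

open Set Metric Filter Topology

section AbsBounded

variable {α : Type*} {h : α → ℝ} {B : ℝ}

lemma bddAbove_range_of_abs_le (hbdd : ∀ x, |h x| ≤ B) : BddAbove (range h) :=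
  ⟨B, by rintro _ ⟨x, rfl⟩; exact (abs_le.1 (hbdd x)).2⟩

lemma bddAbove_range_neg_of_abs_le (hbdd : ∀ x, |h x| ≤ B) : BddAbove (range (-h)) :=
  ⟨B, by rintro _ ⟨x, rfl⟩; exact neg_le.1 (abs_le.1 (hbdd x)).1⟩

end AbsBounded

section BallOscillation

variable {X : Type*} [PseudoMetricSpace X] {h : X → ℝ} {B r r' c : ℝ} {p x : X}

noncomputable def ballSup (h : X → ℝ) (r : ℝ) (p : X) : ℝ := sSup (h '' ball p r)

/-- Equals `⨆ x ∈ ball p r, |h x - h p|`, split into one-sided suprema that are lower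
semicontinuous in `p`. -/
noncomputable def ballOsc (h : X → ℝ) (r : ℝ) (p : X) : ℝ :=
  max (ballSup h r p - h p) (ballSup (-h) r p + h p)

lemma le_ballSup (hh : BddAbove (range h)) (hx : dist x p < r) : h x ≤ ballSup h r p :=
  le_csSup (hh.mono (image_subset_range _ _)) (mem_image_of_mem h (mem_ball.2 hx))

lemma ballSup_le (hr : 0 < r) (hc : ∀ x, dist x p < r → h x ≤ c) : ballSup h r p ≤ c :=
  csSup_le ((nonempty_ball.2 hr).image h) (by rintro _ ⟨x, hx, rfl⟩; exact hc x hx)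

lemma ballSup_mono (hh : BddAbove (range h)) (hr : 0 < r) (hrr' : r ≤ r') :
    ballSup h r p ≤ ballSup h r' p :=
  csSup_le_csSup (hh.mono (image_subset_range _ _)) ((nonempty_ball.2 hr).image h)
    (image_mono (ball_subset_ball hrr'))

lemma lowerSemicontinuous_ballSup (hh : BddAbove (range h)) (hr : 0 < r) :
    LowerSemicontinuous (ballSup h r) := by
  refine lowerSemicontinuous_iff_isOpen_preimage.2 fun t => ?_
  convert isOpen_biUnion (s := {x | t < h x}) fun x _ => isOpen_ball (x := x) (ε := r) using 1
  ext p
  simp only [mem_preimage, mem_iUnion, mem_ofPred_eq, exists_prop, mem_ball_comm (x := p)]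
  constructor
  · intro ht
    obtain ⟨_, ⟨x, hx, rfl⟩, htx⟩ := exists_lt_of_lt_csSup ((nonempty_ball.2 hr).image h) ht
    exact ⟨x, htx, hx⟩
  · rintro ⟨x, htx, hx⟩
    exact htx.trans_le (le_ballSup hh hx)

lemma abs_sub_le_ballOsc (hbdd : ∀ x, |h x| ≤ B) (hx : dist x p < r) :
    |h x - h p| ≤ ballOsc h r p := by
  refine abs_sub_le_iff.2 ⟨le_max_of_le_left ?_, le_max_of_le_right ?_⟩
  · linarith [le_ballSup (bddAbove_range_of_abs_le hbdd) hx]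
  · linarith [le_ballSup (bddAbove_range_neg_of_abs_le hbdd) hx, show (-h) x = -h x from rfl]

lemma ballOsc_nonneg (hbdd : ∀ x, |h x| ≤ B) (hr : 0 < r) : 0 ≤ ballOsc h r p := by
  simpa using abs_sub_le_ballOsc hbdd (x := p) (mem_ball_self hr)

lemma ballOsc_le_of_forall (hr : 0 < r) (hc : ∀ x, dist x p < r → |h x - h p| ≤ c) :
    ballOsc h r p ≤ c :=
  max_le (sub_le_iff_le_add.2 <| ballSup_le hr fun x hx => by linarith [(abs_le.1 (hc x hx)).2])
    (le_sub_iff_add_le.1 <| ballSup_le hr fun x hx => by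
      linarith [(abs_le.1 (hc x hx)).1, show (-h) x = -h x from rfl])

lemma abs_ballOsc_le (hbdd : ∀ x, |h x| ≤ B) (hr : 0 < r) : |ballOsc h r p| ≤ 2 * B := by
  rw [abs_of_nonneg (ballOsc_nonneg hbdd hr)]
  exact ballOsc_le_of_forall hr fun x _ => (abs_sub _ _).trans (by linarith [hbdd x, hbdd p])

lemma ballOsc_mono (hbdd : ∀ x, |h x| ≤ B) (hr : 0 < r) (hrr' : r ≤ r') :
    ballOsc h r p ≤ ballOsc h r' p :=
  max_le_max (by linarith [ballSup_mono (p := p) (bddAbove_range_of_abs_le hbdd) hr hrr'])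
    (by linarith [ballSup_mono (p := p) (bddAbove_range_neg_of_abs_le hbdd) hr hrr'])

lemma measurable_ballOsc [MeasurableSpace X] [OpensMeasurableSpace X] (hbdd : ∀ x, |h x| ≤ B)
    (hh : Measurable h) (hr : 0 < r) : Measurable (ballOsc h r) :=
  (((lowerSemicontinuous_ballSup (bddAbove_range_of_abs_le hbdd) hr).measurable).sub hh).max
    (((lowerSemicontinuous_ballSup (bddAbove_range_neg_of_abs_le hbdd) hr).measurable).add hh)

variable [MeasurableSpace X] [OpensMeasurableSpace X] {Ω : Type*} [MeasurableSpace Ω]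
  {μ : Measure Ω} [IsFiniteMeasure μ]

lemma integrable_ballOsc_comp (hbdd : ∀ x, |h x| ≤ B) (hh : Measurable h) {Z : Ω → X}
    (hZ : Measurable Z) (hr : 0 < r) : Integrable (fun ω => ballOsc h r (Z ω)) μ :=
  .of_bound ((measurable_ballOsc hbdd hh hr).comp hZ).aestronglyMeasurable (2 * B)
    (.of_forall fun _ => abs_ballOsc_le hbdd hr)

lemma abs_integral_sub_le_integral_ballOsc (hbdd : ∀ x, |h x| ≤ B) (hh : Measurable h)
    {P Q : Ω → X} (hP : Measurable P) (hQ : Measurable Q) (hr : 0 < r)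
    (hPQ : ∀ ω, dist (P ω) (Q ω) < r) :
    |∫ ω, h (P ω) ∂μ - ∫ ω, h (Q ω) ∂μ| ≤ ∫ ω, ballOsc h r (Q ω) ∂μ := by
  have hint : ∀ {R : Ω → X}, Measurable R → Integrable (fun ω => h (R ω)) μ := fun hR =>
    .of_bound (hh.comp hR).aestronglyMeasurable B (.of_forall fun ω => hbdd _)
  rw [← integral_sub (hint hP) (hint hQ)]
  exact abs_integral_le_integral_abs.trans <| integral_mono ((hint hP).sub (hint hQ)).abs
    (integrable_ballOsc_comp hbdd hh hQ hr) fun ω => abs_sub_le_ballOsc hbdd (hPQ ω)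

end BallOscillation

section VarSup

variable {n : ℕ} {h : EuclideanSpace ℝ (Fin n) → ℝ} {B r ε : ℝ} {p : EuclideanSpace ℝ (Fin n)}

lemma varSup_le_ballOsc (hbdd : ∀ x, |h x| ≤ B) (hε : 0 ≤ ε) (hεr : ε < r) :
    varSup h ε p ≤ ballOsc h r p :=
  have : Nonempty {x // dist x p ≤ ε} := ⟨⟨p, by simpa using hε⟩⟩
  ciSup_le fun x => abs_sub_le_ballOsc hbdd (x.2.trans_lt hεr)

lemma ballOsc_le_varSup (hbdd : ∀ x, |h x| ≤ B) (hr : 0 < r) (hrε : r ≤ ε) :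
    ballOsc h r p ≤ varSup h ε p := by
  have hbddAbove : BddAbove (range fun x : {x // dist x p ≤ ε} => |h x.1 - h p|) :=
    ⟨2 * B, by rintro _ ⟨x, rfl⟩; exact (abs_sub _ _).trans (by linarith [hbdd x.1, hbdd p])⟩
  exact ballOsc_le_of_forall hr fun x hx => le_ciSup hbddAbove ⟨x, hx.le.trans hrε⟩

end VarSup

section Sandwich

variable {Ω : Type*} [MeasurableSpace Ω] {μ : Measure Ω}

lemma ae_eq_of_le_of_tendsto_integral {f ψ : Ω → ℝ} {F : ℕ → Ω → ℝ} (hf : Integrable f μ)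
    (hF : ∀ n, Integrable (F n) μ) (hfψ : ∀ ω, f ω ≤ ψ ω) (hψF : ∀ n ω, ψ ω ≤ F n ω)
    (hlim : Tendsto (fun n => ∫ ω, F n ω ∂μ) atTop (𝓝 (∫ ω, f ω ∂μ))) : ψ =ᵐ[μ] f := by
  set φ : Ω → ℝ := fun ω => ⨅ n, F n ω
  have hbddBelow : ∀ ω, BddBelow (range fun n => F n ω) :=
    fun ω => ⟨f ω, by rintro _ ⟨n, rfl⟩; exact (hfψ ω).trans (hψF n ω)⟩
  have hfφ : ∀ ω, f ω ≤ φ ω := fun ω => le_ciInf fun n => (hfψ ω).trans (hψF n ω)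
  have hψφ : ∀ ω, ψ ω ≤ φ ω := fun ω => le_ciInf fun n => hψF n ω
  have hφF : ∀ n ω, φ ω ≤ F n ω := fun n ω => ciInf_le (hbddBelow ω) n
  have hφ : Integrable φ μ := by
    refine (hf.abs.add (hF 0).abs).mono' (AEMeasurable.iInf fun n =>
      (hF n).aemeasurable).aestronglyMeasurable (.of_forall fun ω => ?_)
    rw [Real.norm_eq_abs, abs_le, Pi.add_apply]
    constructor <;> linarith [neg_abs_le (f ω), le_abs_self (F 0 ω), abs_nonneg (f ω),
      abs_nonneg (F 0 ω), hfφ ω, hφF 0 ω]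
  have hφf_int : ∫ ω, φ ω ∂μ ≤ ∫ ω, f ω ∂μ :=
    ge_of_tendsto' hlim fun n => integral_mono hφ (hF n) (hφF n)
  have hφf : φ - f =ᵐ[μ] 0 := by
    refine (integral_eq_zero_iff_of_nonneg (fun ω => sub_nonneg.2 (hfφ ω)) (hφ.sub hf)).1 ?_
    rw [integral_sub hφ hf]
    linarith [integral_mono hf hφ hfφ]
  filter_upwards [hφf] with ω hω
  exact le_antisymm ((hψφ ω).trans (sub_eq_zero.1 hω).le) (hfψ ω)

end Sandwich

section RadiusSelection

variable {Ω : Type*} [MeasurableSpace Ω] {μ : Measure Ω} [IsFiniteMeasure μ] {n : ℕ}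
  {h : EuclideanSpace ℝ (Fin n) → ℝ} {B a b : ℝ} {Z : Ω → EuclideanSpace ℝ (Fin n)}

lemma exists_varSup_comp_ae_eq_ballOsc (hbdd : ∀ x, |h x| ≤ B) (hh : Measurable h)
    (hZ : Measurable Z) (ha : 0 ≤ a) (hab : a < b) :
    ∃ r ∈ Ioo a b, (fun ω => varSup h r (Z ω)) =ᵐ[μ] fun ω => ballOsc h r (Z ω) := by
  set G : ℝ → ℝ := fun r => ∫ ω, ballOsc h r (Z ω) ∂μ
  have hG : MonotoneOn G (Ioo a b) := fun s hs t ht hst =>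
    integral_mono (integrable_ballOsc_comp hbdd hh hZ (ha.trans_lt hs.1))
      (integrable_ballOsc_comp hbdd hh hZ (ha.trans_lt ht.1))
      fun ω => ballOsc_mono hbdd (ha.trans_lt hs.1) hst
  obtain ⟨r, hr, hGr⟩ : ∃ r ∈ Ioo a b, ContinuousWithinAt G (Ioo a b ∩ Ioi r) r := by
    obtain ⟨r, hr, hrc⟩ := (hG.countable_not_continuousWithinAt_Ioi.dense_compl ℝ
      ).inter_open_nonempty (Ioo a b) isOpen_Ioo (nonempty_Ioo.2 hab)
    exact ⟨r, hr, by_contra fun hcont => hrc ⟨hr, hcont⟩⟩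
  have hr0 : 0 < r := ha.trans_lt hr.1
  obtain ⟨u, -, hu, hu_lim⟩ := exists_seq_strictAnti_tendsto' hr.2
  have hGu : Tendsto (fun k => G (u k)) atTop (𝓝 (G r)) :=
    hGr.tendsto.comp (tendsto_nhdsWithin_iff.2
      ⟨hu_lim, .of_forall fun k => ⟨⟨hr.1.trans (hu k).1, (hu k).2⟩, (hu k).1⟩⟩)
  exact ⟨r, hr, ae_eq_of_le_of_tendsto_integral (integrable_ballOsc_comp hbdd hh hZ hr0)
    (fun k => integrable_ballOsc_comp hbdd hh hZ (hr0.trans (hu k).1))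
    (fun ω => ballOsc_le_varSup hbdd hr0 le_rfl)
    (fun k ω => varSup_le_ballOsc hbdd hr0.le (hu k).1) hGu⟩

lemma exists_integral_ballOsc_le {L ε₀ : ℝ} (hbdd : ∀ x, |h x| ≤ B) (hh : Measurable h)
    (hZ : Measurable Z) (hvar : ∀ ε, 0 < ε → ε < ε₀ → ∫ ω, varSup h ε (Z ω) ∂μ ≤ L * ε)
    (ha : 0 < a) (hab : a < b) (hb : b ≤ ε₀) :
    ∃ r ∈ Ioo a b, ∫ ω, ballOsc h a (Z ω) ∂μ ≤ L * r := by
  obtain ⟨r, hr, hae⟩ := exists_varSup_comp_ae_eq_ballOsc (μ := μ) hbdd hh hZ ha.le hab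
  refine ⟨r, hr, ?_⟩
  calc ∫ ω, ballOsc h a (Z ω) ∂μ ≤ ∫ ω, ballOsc h r (Z ω) ∂μ :=
        integral_mono (integrable_ballOsc_comp hbdd hh hZ ha)
          (integrable_ballOsc_comp hbdd hh hZ (ha.trans hr.1)) fun ω =>
          ballOsc_mono hbdd ha hr.1.le
    _ = ∫ ω, varSup h r (Z ω) ∂μ := integral_congr_ae hae.symm
    _ ≤ L * r := hvar r (ha.trans hr.1) (hr.2.trans_le hb)

end RadiusSelection

namespace ProbabilityTheory

lemma IndepFun.integral_integral_comp_eq {Ω α β E : Type*} [MeasurableSpace Ω]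
    [MeasurableSpace α] [MeasurableSpace β] [NormedAddCommGroup E] [NormedSpace ℝ E] {μ : Measure Ω}
    [IsFiniteMeasure μ] {X : Ω → α} {W : Ω → β} (hXW : IndepFun X W μ) (hX : Measurable X)
    (hW : Measurable W) {F : α × β → E} (hF : Integrable F (μ.map fun ω => (X ω, W ω))) :
    ∫ ω, ∫ ω', F (X ω, W ω') ∂μ ∂μ = ∫ ω, F (X ω, W ω) ∂μ := by
  have hXW' : Measurable (Prod.map X W) := hX.prodMap hW
  have hlaw : (μ.prod μ).map (Prod.map X W) = μ.map fun ω => (X ω, W ω) := by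
    rw [← Measure.map_prod_map _ _ hX hW, hXW.map_prod_eq_prod_map_map hX.aemeasurable
      hW.aemeasurable]
  have hF' : Integrable F ((μ.prod μ).map (Prod.map X W)) := hlaw ▸ hF
  calc ∫ ω, ∫ ω', F (X ω, W ω') ∂μ ∂μ = ∫ z, F (Prod.map X W z) ∂(μ.prod μ) :=
        integral_integral ((integrable_map_measure hF'.aestronglyMeasurable
          hXW'.aemeasurable).1 hF')
    _ = ∫ q, F q ∂((μ.prod μ).map (Prod.map X W)) :=
        (integral_map hXW'.aemeasurable hF'.aestronglyMeasurable).symm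
    _ = ∫ ω, F (X ω, W ω) ∂μ := by
        rw [hlaw, integral_map (hX.prodMk hW).aemeasurable hF.aestronglyMeasurable]

lemma iIndepFun.indepFun_zero_tail {Ω β : Type*} [MeasurableSpace Ω] [MeasurableSpace β]
    {μ : Measure Ω} {m : ℕ} {Y : Fin (m + 1) → Ω → β} (hY : iIndepFun Y μ)
    (hYmeas : ∀ i, Measurable (Y i)) : IndepFun (Y 0) (fun ω (j : Fin m) => Y j.succ ω) μ :=
  (hY.indepFun_finset {0} {0}ᶜ disjoint_compl_right hYmeas).comp
    (φ := fun v : ({0} : Finset (Fin (m + 1))) → β => v ⟨0, Finset.mem_singleton_self 0⟩)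
    (ψ := fun v : ({0}ᶜ : Finset (Fin (m + 1))) → β => fun j : Fin m =>
      v ⟨j.succ, by simp [Fin.succ_ne_zero]⟩)
    (measurable_pi_apply _) (measurable_pi_lambda _ fun _ => measurable_pi_apply _)

end ProbabilityTheory

section EuclideanCons

variable {m : ℕ}

lemma dist_toLp_cons_cons (x y : ℝ) (v : Fin m → ℝ) :
    dist (WithLp.toLp 2 (Fin.cons x v : Fin (m + 1) → ℝ) : EuclideanSpace ℝ (Fin (m + 1)))
      (WithLp.toLp 2 (Fin.cons y v : Fin (m + 1) → ℝ)) = |x - y| := by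
  simp [EuclideanSpace.dist_eq, Fin.sum_univ_succ, Real.dist_eq, Real.sqrt_sq_eq_abs]

lemma measurable_toLp_cons : Measurable fun q : ℝ × (Fin m → ℝ) =>
    (WithLp.toLp 2 (Fin.cons q.1 q.2 : Fin (m + 1) → ℝ) : EuclideanSpace ℝ (Fin (m + 1))) := by
  refine (WithLp.measurable_toLp 2 _).comp (measurable_pi_lambda _ fun i => ?_)
  cases i using Fin.cases with
  | zero => exact measurable_fst
  | succ j => exact (measurable_pi_apply j).comp measurable_snd

end EuclideanCons

section HoeffdingProjection

variable {m : ℕ} {Ω : Type*} [MeasurableSpace Ω] {μ : Measure Ω} [IsFiniteMeasure μ]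
  {h : EuclideanSpace ℝ (Fin (m + 1)) → ℝ} {B θ ε a : ℝ} {g₁ : ℝ → ℝ}

lemma iSup_abs_sub_le_integral_ballOsc_cons (hbdd : ∀ x, |h x| ≤ B) (hh : Measurable h)
    {T : Ω → Fin m → ℝ} (hT : Measurable T)
    (hg₁ : ∀ x, g₁ x = ∫ ω, h (WithLp.toLp 2 (Fin.cons x (T ω) : Fin (m + 1) → ℝ)) ∂μ - θ)
    (hε : 0 ≤ ε) (hεa : ε < a) (y : ℝ) :
    ⨆ x : {x : ℝ // |x - y| ≤ ε}, |g₁ x.1 - g₁ y| ≤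
      ∫ ω, ballOsc h a (WithLp.toLp 2 (Fin.cons y (T ω) : Fin (m + 1) → ℝ)) ∂μ := by
  have : Nonempty {x : ℝ // |x - y| ≤ ε} := ⟨⟨y, by simpa using hε⟩⟩
  refine ciSup_le fun x => ?_
  rw [hg₁, hg₁, sub_sub_sub_cancel_right]
  exact abs_integral_sub_le_integral_ballOsc hbdd hh
    (measurable_toLp_cons.comp (measurable_const.prodMk hT))
    (measurable_toLp_cons.comp (measurable_const.prodMk hT)) (hε.trans_lt hεa)
    fun ω => by rw [dist_toLp_cons_cons]; exact x.2.trans_lt hεa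

lemma integral_iSup_abs_sub_le_integral_ballOsc (hbdd : ∀ x, |h x| ≤ B) (hh : Measurable h)
    {Y : Fin (m + 1) → Ω → ℝ} (hYmeas : ∀ i, Measurable (Y i)) (hYind : iIndepFun Y μ)
    (hg₁ : ∀ x, g₁ x =
      ∫ ω, h (WithLp.toLp 2 (Fin.cons x (fun j => Y j.succ ω) : Fin (m + 1) → ℝ)) ∂μ - θ)
    (hε : 0 ≤ ε) (hεa : ε < a) :
    ∫ ω, (⨆ x : {x : ℝ // |x - Y 0 ω| ≤ ε}, |g₁ x.1 - g₁ (Y 0 ω)|) ∂μ ≤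
      ∫ ω, ballOsc h a (WithLp.toLp 2 (fun i => Y i ω)) ∂μ := by
  set T : Ω → Fin m → ℝ := fun ω j => Y j.succ ω
  have hT : Measurable T := measurable_pi_lambda _ fun j => hYmeas j.succ
  have ha : 0 < a := hε.trans_lt hεa
  set F : ℝ × (Fin m → ℝ) → ℝ := fun q => ballOsc h a (WithLp.toLp 2 (Fin.cons q.1 q.2))
  calc ∫ ω, (⨆ x : {x : ℝ // |x - Y 0 ω| ≤ ε}, |g₁ x.1 - g₁ (Y 0 ω)|) ∂μ
      ≤ ∫ ω, ∫ ω', F (Y 0 ω, T ω') ∂μ ∂μ :=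
        integral_mono_of_nonneg (.of_forall fun ω => Real.iSup_nonneg fun _ => abs_nonneg _)
          (integrable_ballOsc_comp hbdd hh (measurable_toLp_cons.comp
            (((hYmeas 0).comp measurable_fst).prodMk (hT.comp measurable_snd))) ha
            (μ := μ.prod μ)).integral_prod_left
          (.of_forall fun ω => iSup_abs_sub_le_integral_ballOsc_cons hbdd hh hT hg₁ hε hεa _)
    _ = ∫ ω, F (Y 0 ω, T ω) ∂μ :=
        (hYind.indepFun_zero_tail hYmeas).integral_integral_comp_eq (hYmeas 0) hT
          (integrable_ballOsc_comp hbdd hh measurable_toLp_cons ha)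
    _ = ∫ ω, ballOsc h a (WithLp.toLp 2 (fun i => Y i ω)) ∂μ :=
        integral_congr_ae (.of_forall fun ω => congrArg (fun v => ballOsc h a (WithLp.toLp 2 v))
          (Fin.cons_self_tail fun i => Y i ω))

end HoeffdingProjection

theorem stmt1_general {m : ℕ} {Ω : Type*} [MeasurableSpace Ω] (μ : Measure Ω) [IsProbabilityMeasure μ]
    (h : EuclideanSpace ℝ (Fin (m + 1)) → ℝ) (B : ℝ)
    (hbdd : ∀ x, |h x| ≤ B) (hmeas : Measurable h)
    -- `Y 0, Y 1, ..., Y m` are independent copies of `X₁`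
    (Y : Fin (m + 1) → Ω → ℝ) (hYmeas : ∀ i, Measurable (Y i))
    (hYind : iIndepFun Y μ)
    (L ε₀ : ℝ)
    -- `h` satisfies the variation condition with constant `L`
    (hvar : ∀ ε : ℝ, 0 < ε → ε < ε₀ →
      ∫ ω, varSup h ε (WithLp.toLp 2 (fun i => Y i ω)) ∂μ ≤ L * ε)
    -- `θ` and the first Hoeffding projection `g₁`
    (θ : ℝ)
    (g₁ : ℝ → ℝ)
    (hg₁ : ∀ x : ℝ, g₁ x = (∫ ω, h (WithLp.toLp 2 (Fin.cons x (fun j => Y j.succ ω) : Fin (m + 1) → ℝ)) ∂μ) - θ) :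
    ∀ ε : ℝ, 0 < ε → ε < ε₀ →
      ∫ ω, (⨆ x : {x : ℝ // |x - Y 0 ω| ≤ ε}, |g₁ x.1 - g₁ (Y 0 ω)|) ∂μ ≤ L * ε := by
  intro ε hε hεε₀
  have hZ : Measurable fun ω => (WithLp.toLp 2 (fun i => Y i ω) : EuclideanSpace ℝ (Fin (m + 1))) :=
    (WithLp.measurable_toLp 2 _).comp (measurable_pi_lambda _ hYmeas)
  refine ge_of_tendsto_of_frequently ((continuous_const.mul continuous_id).tendsto ε |>.mono_left
    nhdsWithin_le_nhds) ((nhdsGT_basis ε).frequently_iff.2 fun b hb => ?_)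
  have hb' : ε < min b ε₀ := lt_min hb hεε₀
  obtain ⟨r, hr, hle⟩ := exists_integral_ballOsc_le hbdd hmeas hZ hvar
    (a := (ε + min b ε₀) / 2) (by linarith) (by linarith) (min_le_right b ε₀)
  exact ⟨r, ⟨by linarith [hr.1], hr.2.trans_le (min_le_left b ε₀)⟩,
    (integral_iSup_abs_sub_le_integral_ballOsc hbdd hmeas hYmeas hYind hg₁ hε.le
      (by linarith)).trans hle⟩

/-- If a bounded measurable kernel `h` satisfies the variation condition with constant `L`,
then its first Hoeffding projection `g₁` does as well, with the same constant. -/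
theorem stmt1 {m : ℕ} {Ω : Type*} [MeasurableSpace Ω] (μ : Measure Ω) [IsProbabilityMeasure μ]
    (h : EuclideanSpace ℝ (Fin (m + 1)) → ℝ) (B : ℝ)
    (hbdd : ∀ x, |h x| ≤ B) (hmeas : Measurable h)
    -- `Y 0, Y 1, ..., Y m` are independent copies of `X₁`
    (Y : Fin (m + 1) → Ω → ℝ) (hYmeas : ∀ i, Measurable (Y i))
    (hYid : ∀ i, μ.map (Y i) = μ.map (Y 0))
    (hYind : iIndepFun Y μ)
    (L ε₀ : ℝ) (hε₀ : 0 < ε₀)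
    -- `h` satisfies the variation condition with constant `L`
    (hvar : ∀ ε : ℝ, 0 < ε → ε < ε₀ →
      ∫ ω, varSup h ε (WithLp.toLp 2 (fun i => Y i ω)) ∂μ ≤ L * ε)
    -- `θ` and the first Hoeffding projection `g₁`
    (θ : ℝ) (hθ : θ = ∫ ω, h (WithLp.toLp 2 (fun i => Y i ω)) ∂μ)
    (g₁ : ℝ → ℝ)
    (hg₁ : ∀ x : ℝ, g₁ x = (∫ ω, h (WithLp.toLp 2 (Fin.cons x (fun j => Y j.succ ω) : Fin (m + 1) → ℝ)) ∂μ) - θ) :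
    ∀ ε : ℝ, 0 < ε → ε < ε₀ →
      ∫ ω, (⨆ x : {x : ℝ // |x - Y 0 ω| ≤ ε}, |g₁ x.1 - g₁ (Y 0 ω)|) ∂μ ≤ L * ε :=
  stmt1_general μ h B hbdd hmeas Y hYmeas hYind L ε₀ hvar θ g₁ hg₁
end

section
/- Let h: ℝ^m → ℝ be Lipschitz continuous with constant L̃, let X₁',...,X_m' be independent real random variables such that h(X₁',...,X_m') has a bounded density h_F with sup h_F ≤ M. Then for all t ∈ ℝ and ε > 0, E[sup_{‖(x₁,...,x_m)-(X₁',...,X_m')‖ ≤ ε} |1[h(x₁,...,x_m) ≤ t] - 1[h(X₁',...,X_m') ≤ t]|] ≤ 2 L̃ M ε; in particular the family of kernels g(x₁,...,x_m,t) = 1[h(x₁,...,x_m) ≤ t] satisfies the variation condition uniformly in t. -/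
open MeasureTheory ProbabilityTheory

open Classical in
/-- Real-valued indicator of a proposition. -/
noncomputable def ind (p : Prop) : ℝ := if p then 1 else 0

open Set

/-!
Changing the argument of `h` by at most `ε` moves `h` by at most `L̃ ε`, so the indicator
`1[h(·) ≤ t]` can only jump near `X` when `h(X)` lies in `[t - L̃ ε, t + L̃ ε]`. The supremum is
therefore dominated by the indicator of that event, whose probability is at most `M · 2 L̃ ε`
because `h(X)` has a density bounded by `M`.
-/

lemma abs_ind_sub_ind_le_indicator_Icc {u v t δ : ℝ} (huv : |u - v| ≤ δ) :
    |ind (u ≤ t) - ind (v ≤ t)| ≤ (Icc (t - δ) (t + δ)).indicator 1 v := by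
  obtain ⟨hlo, hhi⟩ := abs_le.mp huv
  have hnonneg : (0 : ℝ) ≤ (Icc (t - δ) (t + δ)).indicator 1 v :=
    indicator_nonneg (fun _ _ => zero_le_one) v
  unfold ind
  by_cases hu : u ≤ t <;> by_cases hv : v ≤ t
  · simpa [hu, hv] using hnonneg
  · rw [indicator_of_mem (show v ∈ Icc (t - δ) (t + δ) from ⟨by linarith, by linarith⟩)]
    simp [hu, hv]
  · rw [indicator_of_mem (show v ∈ Icc (t - δ) (t + δ) from ⟨by linarith, by linarith⟩)]
    simp [hu, hv]
  · simpa [hu, hv] using hnonneg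

lemma LipschitzWith.iSup_abs_ind_sub_le_indicator_Icc {α : Type*} [PseudoMetricSpace α]
    {K : NNReal} {f : α → ℝ} (hf : LipschitzWith K f) (y : α) (t ε : ℝ) :
    ⨆ x : {x : α // dist x y ≤ ε}, |ind (f x ≤ t) - ind (f y ≤ t)| ≤
      (Icc (t - K * ε) (t + K * ε)).indicator 1 (f y) := by
  refine Real.iSup_le (fun x => abs_ind_sub_ind_le_indicator_Icc ?_)
    (indicator_nonneg (fun _ _ => zero_le_one) _)
  rw [← Real.dist_eq]
  exact (hf.dist_le_mul x y).trans (by gcongr; exact x.2)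

lemma withDensity_ofReal_apply_le {α : Type*} [MeasurableSpace α] (μ : Measure α)
    {f : α → ℝ} {M : ℝ} (hfM : ∀ x, f x ≤ M) (s : Set α) :
    μ.withDensity (fun x => ENNReal.ofReal (f x)) s ≤ ENNReal.ofReal M * μ s := by
  calc μ.withDensity (fun x => ENNReal.ofReal (f x)) s
      ≤ μ.withDensity (fun _ => ENNReal.ofReal M) s :=
        withDensity_mono (ae_of_all _ fun x => ENNReal.ofReal_le_ofReal (hfM x)) s
    _ = ENNReal.ofReal M * μ s := by rw [withDensity_const, Measure.smul_apply, smul_eq_mul]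

lemma measureReal_withDensity_Icc_le {f : ℝ → ℝ} {M : ℝ} (hM : 0 ≤ M) (hfM : ∀ x, f x ≤ M)
    {a b : ℝ} (hab : a ≤ b) :
    (volume.withDensity fun x => ENNReal.ofReal (f x)).real (Icc a b) ≤ M * (b - a) := by
  have hle := withDensity_ofReal_apply_le volume hfM (Icc a b)
  rw [Real.volume_Icc, ← ENNReal.ofReal_mul hM] at hle
  exact ENNReal.toReal_le_of_le_ofReal (mul_nonneg hM (sub_nonneg.mpr hab)) hle

theorem stmt3_general {m : ℕ} {Ω : Type*} [MeasurableSpace Ω] (μ : Measure Ω) [IsProbabilityMeasure μ]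
    (h : EuclideanSpace ℝ (Fin m) → ℝ) (Ltilde : NNReal)
    (hlip : LipschitzWith Ltilde h)
    (X : Ω → EuclideanSpace ℝ (Fin m))
    (hX : ∀ i, Measurable fun ω => X ω i)
    (hF : ℝ → ℝ) (M : ℝ) (hFnonneg : ∀ x, 0 ≤ hF x) (hFbdd : ∀ x, hF x ≤ M)
    -- `h(X₁',...,X_m')` has density `hF` with respect to Lebesgue measure
    (hdens : μ.map (fun ω => h (X ω)) =
      MeasureTheory.volume.withDensity (fun x => ENNReal.ofReal (hF x))) :
    ∀ (t : ℝ) (ε : ℝ), 0 < ε →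
      ∫ ω, (⨆ x : {x : EuclideanSpace ℝ (Fin m) // dist x (X ω) ≤ ε},
          |ind (h x.1 ≤ t) - ind (h (X ω) ≤ t)|) ∂μ ≤ 2 * (Ltilde : ℝ) * M * ε := by
  intro t ε hε
  set S := Icc (t - Ltilde * ε) (t + Ltilde * ε)
  have hY : Measurable fun ω => h (X ω) :=
    hlip.continuous.measurable.comp ((WithLp.measurable_toLp 2 _).comp (measurable_pi_iff.mpr hX))
  have hS : Measurable (S.indicator (1 : ℝ → ℝ)) := measurable_const.indicator measurableSet_Icc
  calc _ ≤ ∫ ω, S.indicator 1 (h (X ω)) ∂μ :=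
        integral_mono_of_nonneg (ae_of_all _ fun _ => Real.iSup_nonneg fun _ => abs_nonneg _)
          ((integrable_const (1 : ℝ)).indicator (hY measurableSet_Icc))
          (ae_of_all _ fun ω => hlip.iSup_abs_ind_sub_le_indicator_Icc (X ω) t ε)
    _ = (μ.map fun ω => h (X ω)).real S := by
        rw [← integral_map hY.aemeasurable hS.aestronglyMeasurable,
          integral_indicator_one measurableSet_Icc]
    _ ≤ M * ((t + Ltilde * ε) - (t - Ltilde * ε)) := by
        rw [hdens]
        exact measureReal_withDensity_Icc_le ((hFnonneg 0).trans (hFbdd 0)) hFbdd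
          (by linarith [mul_nonneg Ltilde.coe_nonneg hε.le])
    _ = 2 * Ltilde * M * ε := by ring

/-- Variation condition, uniformly in `t`, for the indicator kernels `1[h(·) ≤ t]` of a
Lipschitz kernel whose value at the random point has a bounded density. -/
theorem stmt3 {m : ℕ} {Ω : Type*} [MeasurableSpace Ω] (μ : Measure Ω) [IsProbabilityMeasure μ]
    (h : EuclideanSpace ℝ (Fin m) → ℝ) (Ltilde : NNReal)
    (hlip : LipschitzWith Ltilde h)
    (X : Ω → EuclideanSpace ℝ (Fin m))
    (hX : ∀ i, Measurable fun ω => X ω i)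
    (hind : iIndepFun (fun i ω => X ω i) μ)
    (hF : ℝ → ℝ) (M : ℝ) (hFnonneg : ∀ x, 0 ≤ hF x) (hFbdd : ∀ x, hF x ≤ M)
    -- `h(X₁',...,X_m')` has density `hF` with respect to Lebesgue measure
    (hdens : μ.map (fun ω => h (X ω)) =
      MeasureTheory.volume.withDensity (fun x => ENNReal.ofReal (hF x))) :
    ∀ (t : ℝ) (ε : ℝ), 0 < ε →
      ∫ ω, (⨆ x : {x : EuclideanSpace ℝ (Fin m) // dist x (X ω) ≤ ε},
          |ind (h x.1 ≤ t) - ind (h (X ω) ≤ t)|) ∂μ ≤ 2 * (Ltilde : ℝ) * M * ε :=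
  stmt3_general μ h Ltilde hlip X hX hF M hFnonneg hFbdd hdens
end

section
/- Fix n, k, l ∈ ℕ with k ≥ 2. The number of 2k-tuples (i₁,...,i_{2k}) with each i_j ∈ {1,...,n} whose order statistics i_{(1)} ≤ i_{(2)} ≤ ... ≤ i_{(2k)} satisfy max{i_{(2)} - i_{(1)}, i_{(2k)} - i_{(2k-1)}} = l is at most (2k)! · l · n^{2k-2} (for l ≥ 1), and at most (2k)! · n^{2k-2} for l = 0. -/
/-- The `j`-th order statistic (0-indexed) of a tuple of natural numbers. -/
def sortedVal {N : ℕ} (t : Fin N → ℕ) (j : ℕ) : ℕ :=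
  ((List.ofFn t).mergeSort (· ≤ ·)).getD j 0

/-- `max { i₍₂₎ - i₍₁₎ , i₍₂ₖ₎ - i₍₂ₖ₋₁₎ }` for a tuple of `2k` indices. -/
def maxGap {N : ℕ} (t : Fin N → ℕ) : ℕ :=
  max (sortedVal t 1 - sortedVal t 0) (sortedVal t (N - 1) - sortedVal t (N - 2))

/-!
Deleting an entry `t q` at which a tuple attains its maximum loses no information once the
top gap `g` is known: `t q` is the largest remaining entry plus `g`. So `t ↦ (q, t without q)`
is injective on tuples with a given top gap, and for tuples of length at least three it does not
change the bottom gap. Counting pairs (tuple, position of a maximum) rather than tuples, a tuple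
with top gap `0` is counted at least twice; this gives
`2 · #{top gap ≤ L} ≤ (2L + 1) m n^(m-1)` for `m`-tuples. The reflection `i ↦ n + 1 - i`
exchanges the two gaps, so the bottom gap is handled by the same argument. Altogether the count
is at most `2l · 2k (2k - 1) n^(2k-2) ≤ (2k)! l n^(2k-2)`, using `(2k - 2)! ≥ 2`.
-/

open Finset

variable {N M n : ℕ}

lemma List.ofFn_perm_cons_comp_succAbove {α : Type*} (w : Fin (M + 1) → α)
    (q : Fin (M + 1)) : (List.ofFn w).Perm (w q :: List.ofFn (w ∘ q.succAbove)) := by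
  have hw : (Fin.cons (w q) (w ∘ q.succAbove) : Fin (M + 1) → α) ∘ q.cycleRange = w := by
    rw [Fin.cons_comp_cycleRange]
    exact Fin.insertNth_self_removeNth q w
  conv_lhs => rw [← hw]
  exact (q.cycleRange.ofFn_comp_perm _).trans (by rw [List.ofFn_succ]; rfl)

lemma pairwise_mergeSort_ofFn (w : Fin N → ℕ) :
    ((List.ofFn w).mergeSort (· ≤ ·)).Pairwise (· ≤ ·) := by
  simpa using List.pairwise_mergeSort' (· ≤ ·) (List.ofFn w)

lemma mergeSort_ofFn_of_forall_le (w : Fin (M + 1) → ℕ) {q : Fin (M + 1)}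
    (hq : ∀ j, w j ≤ w q) :
    (List.ofFn w).mergeSort (· ≤ ·)
      = (List.ofFn (w ∘ q.succAbove)).mergeSort (· ≤ ·) ++ [w q] := by
  refine List.Perm.eq_of_pairwise' (pairwise_mergeSort_ofFn w) ?_ ?_
  · refine List.pairwise_append.2 ⟨pairwise_mergeSort_ofFn _, List.pairwise_singleton _ _, ?_⟩
    intro x hx y hy
    obtain ⟨j, rfl⟩ := List.mem_ofFn.1 (List.mem_mergeSort.1 hx)
    rw [List.mem_singleton.1 hy]
    exact hq _
  · refine (List.mergeSort_perm _ _).trans ((List.ofFn_perm_cons_comp_succAbove w q).trans ?_)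
    exact (((List.mergeSort_perm _ _).append_right _).trans (List.perm_append_singleton _ _)).symm

lemma sortedVal_last_of_forall_le (w : Fin (M + 1) → ℕ) {q : Fin (M + 1)}
    (hq : ∀ j, w j ≤ w q) : sortedVal w M = w q := by
  rw [sortedVal, mergeSort_ofFn_of_forall_le w hq, List.getD_append_right _ _ _ _ (by simp)]
  simp

lemma sortedVal_comp_succAbove_of_forall_le (w : Fin (M + 1) → ℕ) {q : Fin (M + 1)}
    (hq : ∀ j, w j ≤ w q) {i : ℕ} (hi : i < M) :
    sortedVal (w ∘ q.succAbove) i = sortedVal w i := by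
  rw [sortedVal, sortedVal, mergeSort_ofFn_of_forall_le w hq, List.getD_append _ _ _ _ (by simpa)]

lemma sortedVal_le {w : Fin N → ℕ} {c : ℕ} (hw : ∀ j, w j ≤ c) (i : ℕ) :
    sortedVal w i ≤ c := by
  rw [sortedVal, List.getD_eq_getElem?_getD]
  cases h : ((List.ofFn w).mergeSort (· ≤ ·))[i]? with
  | none => simp
  | some x =>
    obtain ⟨j, rfl⟩ := List.mem_ofFn.1 (List.mem_mergeSort.1 (List.mem_of_getElem? h))
    exact hw j

lemma mergeSort_ofFn_tsub (w : Fin N → ℕ) (c : ℕ) :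
    (List.ofFn fun j => c - w j).mergeSort (· ≤ ·)
      = ((List.ofFn w).mergeSort (· ≤ ·)).reverse.map (c - ·) := by
  refine List.Perm.eq_of_pairwise' (pairwise_mergeSort_ofFn _) ?_ ?_
  · rw [List.pairwise_map, List.pairwise_reverse]
    exact (pairwise_mergeSort_ofFn w).imp fun hxy => Nat.sub_le_sub_left hxy c
  · refine (List.mergeSort_perm _ _).trans ?_
    rw [show (List.ofFn fun j => c - w j) = (List.ofFn w).map (c - ·) from List.map_ofFn.symm]
    exact (((List.reverse_perm _).trans (List.mergeSort_perm _ _)).map _).symm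

lemma sortedVal_tsub (w : Fin N → ℕ) (c : ℕ) {i : ℕ} (hi : i < N) :
    sortedVal (fun j => c - w j) i = c - sortedVal w (N - 1 - i) := by
  rw [sortedVal, sortedVal, mergeSort_ofFn_tsub w c, List.getD_eq_getElem _ _ (by simpa),
    List.getD_eq_getElem _ _ (by simp; omega), List.getElem_map, List.getElem_reverse]
  simp

def bottomGap (w : Fin N → ℕ) : ℕ := sortedVal w 1 - sortedVal w 0

def topGap (w : Fin N → ℕ) : ℕ := sortedVal w (N - 1) - sortedVal w (N - 2)

def maxPositions (w : Fin N → ℕ) : Finset (Fin N) := {q | ∀ j, w j ≤ w q}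

lemma maxPositions_nonempty [NeZero N] (w : Fin N → ℕ) : (maxPositions w).Nonempty := by
  obtain ⟨q, hq⟩ := Finite.exists_max w
  exact ⟨q, by simpa [maxPositions] using hq⟩

lemma maxGap_eq_max (w : Fin N → ℕ) : maxGap w = max (bottomGap w) (topGap w) := rfl

lemma topGap_eq (w : Fin (M + 2) → ℕ) : topGap w = sortedVal w (M + 1) - sortedVal w M := rfl

lemma bottomGap_tsub (hN : 2 ≤ N) (w : Fin N → ℕ) {c : ℕ} (hw : ∀ j, w j ≤ c) :
    bottomGap (fun j => c - w j) = topGap w := by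
  have := sortedVal_le hw (N - 1)
  rw [bottomGap, topGap, sortedVal_tsub w c (by omega), sortedVal_tsub w c (by omega),
    show N - 1 - 1 = N - 2 by omega, Nat.sub_zero]
  omega

lemma topGap_tsub (hN : 2 ≤ N) (w : Fin N → ℕ) {c : ℕ} (hw : ∀ j, w j ≤ c) :
    topGap (fun j => c - w j) = bottomGap w := by
  have := sortedVal_le hw 1
  rw [bottomGap, topGap, sortedVal_tsub w c (by omega), sortedVal_tsub w c (by omega),
    show N - 1 - (N - 2) = 1 by omega, Nat.sub_self]
  omega

lemma bottomGap_comp_succAbove (hM : 1 ≤ M) (w : Fin (M + 2) → ℕ) {q : Fin (M + 2)}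
    (hq : q ∈ maxPositions w) : bottomGap (w ∘ q.succAbove) = bottomGap w := by
  simp only [maxPositions, mem_filter_univ] at hq
  rw [bottomGap, bottomGap, sortedVal_comp_succAbove_of_forall_le w hq (by omega),
    sortedVal_comp_succAbove_of_forall_le w hq (by omega)]

lemma sortedVal_comp_succAbove_add_topGap (w : Fin (M + 2) → ℕ) {q : Fin (M + 2)}
    (hq : q ∈ maxPositions w) : sortedVal (w ∘ q.succAbove) M + topGap w = w q := by
  simp only [maxPositions, mem_filter_univ] at hq
  obtain ⟨q', hq'⟩ := Finite.exists_max (w ∘ q.succAbove)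
  have hmax := sortedVal_last_of_forall_le w hq
  have hnext := sortedVal_comp_succAbove_of_forall_le w hq (Nat.lt_succ_self M)
  have hmax' := sortedVal_last_of_forall_le (w ∘ q.succAbove) hq'
  have := hq (q.succAbove q')
  rw [topGap_eq]
  simp only [Function.comp_apply] at *
  omega

lemma two_le_card_maxPositions (w : Fin (M + 2) → ℕ) (h : topGap w = 0) :
    2 ≤ #(maxPositions w) := by
  obtain ⟨q, hqmem⟩ := maxPositions_nonempty w
  obtain ⟨q', hq'⟩ := Finite.exists_max (w ∘ q.succAbove)
  have htie := sortedVal_comp_succAbove_add_topGap w hqmem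
  rw [h, Nat.add_zero, sortedVal_last_of_forall_le _ hq', Function.comp_apply] at htie
  refine one_lt_card.2 ⟨q, hqmem, q.succAbove q', ?_, (Fin.succAbove_ne q q').symm⟩
  simpa [maxPositions, htie] using hqmem

def oneBased (t : Fin N → Fin n) : Fin N → ℕ := fun j => (t j : ℕ) + 1

lemma oneBased_le (t : Fin N → Fin n) (j : Fin N) : oneBased t j ≤ n + 1 := by
  simp only [oneBased]
  omega

lemma oneBased_rev (t : Fin N → Fin n) :
    oneBased (Fin.rev ∘ t) = fun j => (n + 1) - oneBased t j := by
  funext j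
  simp only [oneBased, Function.comp_apply, Fin.val_rev]
  omega

lemma card_filter_gaps_swap (hN : 2 ≤ N) (Q : ℕ → ℕ → Prop) [DecidableRel Q] :
    #{t : Fin N → Fin n | Q (bottomGap (oneBased t)) (topGap (oneBased t))}
      = #{t : Fin N → Fin n | Q (topGap (oneBased t)) (bottomGap (oneBased t))} := by
  have hbot (t : Fin N → Fin n) : bottomGap (oneBased (Fin.rev ∘ t)) = topGap (oneBased t) := by
    rw [oneBased_rev]
    exact bottomGap_tsub hN _ (oneBased_le t)
  have htop (t : Fin N → Fin n) : topGap (oneBased (Fin.rev ∘ t)) = bottomGap (oneBased t) := by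
    rw [oneBased_rev]
    exact topGap_tsub hN _ (oneBased_le t)
  have hrev (t : Fin N → Fin n) : Fin.rev ∘ (Fin.rev ∘ t) = t := by
    funext j
    simp
  refine card_nbij' (Fin.rev ∘ ·) (Fin.rev ∘ ·) ?_ ?_ (fun t _ => hrev t) (fun t _ => hrev t)
  · intro t ht
    simpa [hbot, htop] using ht
  · intro t ht
    simpa [hbot, htop, hrev] using ht

lemma sum_card_maxPositions_le {g : ℕ} (T : Finset (Fin (M + 2) → Fin n))
    (S : Finset (Fin (M + 1) → Fin n)) (hT : ∀ t ∈ T, topGap (oneBased t) = g)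
    (hS : ∀ t ∈ T, ∀ q ∈ maxPositions (oneBased t), Fin.removeNth q t ∈ S) :
    ∑ t ∈ T, #(maxPositions (oneBased t)) ≤ (M + 2) * #S := by
  rw [← card_sigma]
  refine (card_le_card_of_injOn (t := univ ×ˢ S) (fun x => (x.2, Fin.removeNth x.2 x.1))
    ?_ ?_).trans (by simp)
  · rintro ⟨t, q⟩ hx
    simp only [coe_sigma, Set.mem_sigma_iff, mem_coe] at hx
    exact mem_product.2 ⟨mem_univ _, hS t hx.1 q hx.2⟩
  · rintro ⟨t, q⟩ hx ⟨t', q'⟩ hx' heq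
    simp only [coe_sigma, Set.mem_sigma_iff, mem_coe] at hx hx'
    simp only [Prod.mk.injEq] at heq
    obtain ⟨rfl, hrest⟩ := heq
    have hval := sortedVal_comp_succAbove_add_topGap (oneBased t) hx.2
    have hval' := sortedVal_comp_succAbove_add_topGap (oneBased t') hx'.2
    rw [hT t hx.1] at hval
    rw [hT t' hx'.1, show oneBased t' ∘ q.succAbove = oneBased t ∘ q.succAbove from
      congrArg oneBased hrest.symm] at hval'
    have hq : t q = t' q := Fin.ext (by simp only [oneBased] at hval hval'; omega)
    rw [← Fin.insertNth_self_removeNth q t, ← Fin.insertNth_self_removeNth q t', hq, hrest]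

lemma card_le_of_topGap_eq {g : ℕ} (T : Finset (Fin (M + 2) → Fin n))
    (S : Finset (Fin (M + 1) → Fin n)) (hT : ∀ t ∈ T, topGap (oneBased t) = g)
    (hS : ∀ t ∈ T, ∀ q ∈ maxPositions (oneBased t), Fin.removeNth q t ∈ S) :
    #T ≤ (M + 2) * #S := by
  refine le_trans ?_ (sum_card_maxPositions_le T S hT hS)
  simpa using card_nsmul_le_sum T (fun t => #(maxPositions (oneBased t))) 1
    fun t _ => card_pos.2 (maxPositions_nonempty (oneBased t))

lemma two_mul_card_le_of_topGap_eq_zero (T : Finset (Fin (M + 2) → Fin n))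
    (hT : ∀ t ∈ T, topGap (oneBased t) = 0) : 2 * #T ≤ (M + 2) * n ^ (M + 1) := by
  refine le_trans ?_ ((sum_card_maxPositions_le T univ hT fun _ _ _ _ => mem_univ _).trans_eq
    (by simp))
  simpa [mul_comm] using card_nsmul_le_sum T _ 2 fun t ht => two_le_card_maxPositions _ (hT t ht)

lemma two_mul_card_topGap_le (L : ℕ) :
    2 * #{u : Fin (M + 2) → Fin n | topGap (oneBased u) ≤ L}
      ≤ (2 * L + 1) * ((M + 2) * n ^ (M + 1)) := by
  induction L with
  | zero =>
    simpa using two_mul_card_le_of_topGap_eq_zero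
      {u : Fin (M + 2) → Fin n | topGap (oneBased u) ≤ 0} fun u hu => by simpa using hu
  | succ L ih =>
    have hsplit : #{u : Fin (M + 2) → Fin n | topGap (oneBased u) ≤ L + 1}
        ≤ #{u : Fin (M + 2) → Fin n | topGap (oneBased u) ≤ L}
          + #{u : Fin (M + 2) → Fin n | topGap (oneBased u) = L + 1} := by
      refine (card_le_card fun u hu => ?_).trans (card_union_le _ _)
      simp only [mem_union, mem_filter_univ] at hu ⊢
      omega
    have hlast := card_le_of_topGap_eq {u : Fin (M + 2) → Fin n | topGap (oneBased u) = L + 1}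
      univ (fun u hu => by simpa using hu) fun _ _ _ _ => mem_univ _
    simp only [card_univ, Fintype.card_fun, Fintype.card_fin] at hlast
    nlinarith

lemma card_topGap_eq_bottomGap_le (l L : ℕ) :
    #{t : Fin (M + 3) → Fin n | topGap (oneBased t) = l ∧ bottomGap (oneBased t) ≤ L}
      ≤ (M + 3) * #{u : Fin (M + 2) → Fin n | topGap (oneBased u) ≤ L} := by
  calc _ ≤ (M + 3) * #{u : Fin (M + 2) → Fin n | bottomGap (oneBased u) ≤ L} := by
        refine card_le_of_topGap_eq _ _ (fun t ht => ((mem_filter_univ t).1 ht).1)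
          fun t ht q hq => ?_
        rw [mem_filter_univ] at ht ⊢
        exact (bottomGap_comp_succAbove (by omega) (oneBased t) hq).trans_le ht.2
    _ = _ := congrArg ((M + 3) * ·) (card_filter_gaps_swap (by omega) fun b _ => b ≤ L)

lemma two_mul_card_topGap_eq_bottomGap_le (l L : ℕ) :
    2 * #{t : Fin (M + 3) → Fin n | topGap (oneBased t) = l ∧ bottomGap (oneBased t) ≤ L}
      ≤ (2 * L + 1) * ((M + 3) * (M + 2) * n ^ (M + 1)) := by
  have := card_topGap_eq_bottomGap_le (M := M) (n := n) l L
  nlinarith [two_mul_card_topGap_le (M := M) (n := n) L]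

lemma card_maxGap_eq_le (hN : 2 ≤ N) {l : ℕ} (hl : 1 ≤ l) :
    #{t : Fin N → Fin n | maxGap (oneBased t) = l}
      ≤ #{t : Fin N → Fin n | topGap (oneBased t) = l ∧ bottomGap (oneBased t) ≤ l}
        + #{t : Fin N → Fin n | topGap (oneBased t) = l ∧ bottomGap (oneBased t) ≤ l - 1} :=
  calc _ ≤ #(({t | topGap (oneBased t) = l ∧ bottomGap (oneBased t) ≤ l} :
              Finset (Fin N → Fin n))
          ∪ ({t | bottomGap (oneBased t) = l ∧ topGap (oneBased t) ≤ l - 1} : Finset _)) := by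
        refine card_le_card fun t ht => ?_
        simp only [mem_union, mem_filter_univ] at ht ⊢
        rw [maxGap_eq_max] at ht
        omega
    _ ≤ _ := card_union_le _ _
    _ = _ := congrArg (_ + ·) (card_filter_gaps_swap hN fun b t => b = l ∧ t ≤ l - 1)

lemma card_maxGap_eq_zero_le :
    #{t : Fin N → Fin n | maxGap (oneBased t) = 0}
      ≤ #{t : Fin N → Fin n | topGap (oneBased t) = 0 ∧ bottomGap (oneBased t) ≤ 0} := by
  refine card_le_card fun t ht => ?_
  simp only [mem_filter_univ] at ht ⊢
  rw [maxGap_eq_max] at ht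
  omega

lemma two_mul_mul_le_factorial (hM : 1 ≤ M) : 2 * ((M + 3) * (M + 2)) ≤ (M + 3).factorial := by
  have h2 : 2 ≤ (M + 1).factorial := Nat.factorial_le (m := 2) (by omega)
  calc 2 * ((M + 3) * (M + 2)) ≤ (M + 1).factorial * ((M + 3) * (M + 2)) := by gcongr
    _ = (M + 3).factorial := by simp only [Nat.factorial_succ]; ring

/-- The number of `2k`-tuples of indices in `{1,...,n}` with
`max{i₍₂₎ - i₍₁₎, i₍₂ₖ₎ - i₍₂ₖ₋₁₎} = l` is at most `(2k)! · l · n^(2k-2)` for `l ≥ 1`,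
and at most `(2k)! · n^(2k-2)` for `l = 0`. -/
theorem stmt5 (n k l : ℕ) (hk : 2 ≤ k) :
    (1 ≤ l →
      ((Finset.univ : Finset (Fin (2 * k) → Fin n)).filter
          (fun t => maxGap (fun j => (t j : ℕ) + 1) = l)).card
        ≤ Nat.factorial (2 * k) * l * n ^ (2 * k - 2)) ∧
    (l = 0 →
      ((Finset.univ : Finset (Fin (2 * k) → Fin n)).filter
          (fun t => maxGap (fun j => (t j : ℕ) + 1) = l)).card
        ≤ Nat.factorial (2 * k) * n ^ (2 * k - 2)) := by
  obtain ⟨M, hM, hN⟩ : ∃ M, 1 ≤ M ∧ 2 * k = M + 3 := ⟨2 * k - 3, by omega, by omega⟩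
  rw [hN, show M + 3 - 2 = M + 1 by omega]
  have hfact : 2 * ((M + 3) * (M + 2) * n ^ (M + 1)) ≤ (M + 3).factorial * n ^ (M + 1) := by
    have := Nat.mul_le_mul_right (n ^ (M + 1)) (two_mul_mul_le_factorial hM)
    linarith
  constructor
  · intro hl
    obtain ⟨l, rfl⟩ : ∃ l', l = l' + 1 := ⟨l - 1, by omega⟩
    refine (card_maxGap_eq_le (by omega) hl).trans ?_
    have hA := two_mul_card_topGap_eq_bottomGap_le (M := M) (n := n) (l + 1) (l + 1)
    have hB := two_mul_card_topGap_eq_bottomGap_le (M := M) (n := n) (l + 1) l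
    have := Nat.mul_le_mul_left (l + 1) hfact
    rw [Nat.add_sub_cancel]
    nlinarith
  · rintro rfl
    refine card_maxGap_eq_zero_le.trans ?_
    nlinarith [two_mul_card_topGap_eq_bottomGap_le (M := M) (n := n) 0 0]
end

section
/- Let g_k: ℝ^k → ℝ and suppose there is a constant C such that for all index tuples i₁,...,i_{2k} in {1,...,n}, |E[g_k(X_{i₁},...,X_{i_k}) g_k(X_{i_{k+1}},...,X_{i_{2k}})]| ≤ C·β(l), where l = max{i_{(2)} - i_{(1)}, i_{(2k)} - i_{(2k-1)}} with i_{(1)} ≤ ... ≤ i_{(2k)} the ordered indices, and β: ℕ → [0,∞) satisfies Σ_{l=0}^{n} l·β(l) ≤ K·n^γ for some γ ≥ 0 and all n. Then Σ over all i₁,...,i_{2k} in {1,...,n} of |E[g_k(X_{i₁},...,X_{i_k}) g_k(X_{i_{k+1}},...,X_{i_{2k}})]| ≤ C' · n^{2k-2+γ} for a constant C' depending only on C, K, k. -/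
/-!
Sort the indices of `i : Fin N → ℕ` and let `a, b` be the positions of the two smallest and
`c, d` those of the two largest. Up to swapping the two pairs, `maxGap i = i b - i a` with
`i c ≤ i d ≤ i c + (i b - i a)`, so `β (maxGap i)` is bounded by a sum, over the `O(N⁴)`
injective choices of four positions, of a kernel of the four values at those positions. For a
fixed choice the other `N - 4` coordinates are free, and the four values with `i b - i a = l`
admit at most `n² (l + 1)` choices, so the whole sum is `O(n^(N-2) Σ_{l ≤ n} (l + 1) β l)`,
which is `O(n^(N-2+γ))` by the hypothesis on `Σ l β l`.
-/

open MeasureTheory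

open Finset
open Fintype (piFinset mem_piFinset)

lemma mergeSort_ofFn_eq {N : ℕ} (t : Fin N → ℕ) :
    (List.ofFn t).mergeSort (· ≤ ·) = List.ofFn (t ∘ Tuple.sort t) :=
  List.Perm.eq_of_sortedLE List.sortedLE_mergeSort (Tuple.monotone_sort t).sortedLE_ofFn
    ((List.mergeSort_perm _ _).trans ((Tuple.sort t).ofFn_comp_perm t).symm)

lemma sortedVal_eq {N : ℕ} (t : Fin N → ℕ) {j : ℕ} (h : j < N) :
    sortedVal t j = t (Tuple.sort t ⟨j, h⟩) := by
  rw [sortedVal, mergeSort_ofFn_eq, List.getD_eq_getElem _ _ (by simpa using h)]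
  simp [List.getElem_ofFn]

lemma exists_embedding_maxGap_eq {N : ℕ} (hN : 4 ≤ N) (t : Fin N → ℕ) :
    ∃ e : Fin 4 ↪ Fin N, t (e 0) ≤ t (e 1) ∧ t (e 2) ≤ t (e 3) ∧
      t (e 3) - t (e 2) ≤ t (e 1) - t (e 0) ∧ maxGap t = t (e 1) - t (e 0) := by
  set σ := Tuple.sort t
  let p : Fin 4 → Fin N := ![⟨0, by omega⟩, ⟨1, by omega⟩, ⟨N - 2, by omega⟩, ⟨N - 1, by omega⟩]
  have hp : Function.Injective p := by
    intro a b h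
    fin_cases a <;> fin_cases b <;> simp [p, Fin.ext_iff] at h ⊢ <;> omega
  have hmono : Monotone (t ∘ σ) := Tuple.monotone_sort t
  have h01 : t (σ (p 0)) ≤ t (σ (p 1)) := hmono (by simp [p, Fin.le_def])
  have h23 : t (σ (p 2)) ≤ t (σ (p 3)) := hmono (by simp [p, Fin.le_def]; omega)
  have hgap : maxGap t = max (t (σ (p 1)) - t (σ (p 0))) (t (σ (p 3)) - t (σ (p 2))) := by
    simp only [maxGap, sortedVal_eq t (by omega : 0 < N), sortedVal_eq t (by omega : 1 < N),
      sortedVal_eq t (by omega : N - 2 < N), sortedVal_eq t (by omega : N - 1 < N)]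
    rfl
  rcases le_total (t (σ (p 3)) - t (σ (p 2))) (t (σ (p 1)) - t (σ (p 0))) with h | h
  · exact ⟨⟨σ ∘ p, σ.injective.comp hp⟩, h01, h23, h, by simp [hgap, h]⟩
  · have hswap : Function.Injective (![2, 3, 0, 1] : Fin 4 → Fin 4) := by decide
    exact ⟨⟨σ ∘ p ∘ ![2, 3, 0, 1], (σ.injective.comp hp).comp hswap⟩, h23, h01, h,
      by simp [hgap, h]⟩

section Fibers

variable {κ α β : Type*} [Fintype κ] [DecidableEq κ] [DecidableEq β]

lemma card_filter_piFinset_le (I : Finset α) (s : Finset κ) (φ : (κ → α) → β)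
    (hφ : ∀ i i', φ i = φ i' → ∀ x ∈ s, i x = i' x) (b : β) :
    #{i ∈ piFinset fun _ => I | φ i = b} ≤ #I ^ (Fintype.card κ - #s) := by
  calc #{i ∈ piFinset fun _ => I | φ i = b}
      ≤ #(piFinset fun _ : {x // x ∉ s} => I) := by
        refine card_le_card_of_injOn (fun i x => i x) (fun i hi => ?_) fun i hi i' hi' h => ?_
        · simp only [coe_filter, Set.mem_ofPred_eq, mem_piFinset] at hi
          simp [hi.1]
        · simp only [coe_filter, Set.mem_ofPred_eq] at hi hi'
          funext x
          by_cases hx : x ∈ s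
          · exact hφ i i' (hi.2.trans hi'.2.symm) x hx
          · exact congrFun h ⟨x, hx⟩
    _ = #I ^ (Fintype.card κ - #s) := by
        simp [Fintype.card_subtype_compl]

variable {R : Type*} [AddCommMonoid R] [PartialOrder R] [IsOrderedAddMonoid R]

lemma sum_piFinset_comp_le (I : Finset α) (s : Finset κ) (φ : (κ → α) → β)
    (hφ : ∀ i i', φ i = φ i' → ∀ x ∈ s, i x = i' x) (T : Finset β)
    (hT : ∀ i ∈ piFinset fun _ => I, φ i ∈ T) (F : β → R) (hF : ∀ b, 0 ≤ F b) :
    ∑ i ∈ piFinset (fun _ => I), F (φ i) ≤ #I ^ (Fintype.card κ - #s) • ∑ b ∈ T, F b := by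
  rw [← sum_fiberwise_of_maps_to hT, smul_sum]
  refine sum_le_sum fun b _ => ?_
  rw [Finset.sum_congr rfl fun i hi => by rw [(mem_filter.1 hi).2], sum_const]
  exact nsmul_le_nsmul_left (hF b) (card_filter_piFinset_le I s φ hφ b)

end Fibers

lemma sum_Icc_ite_sub_le {R : Type*} [AddCommMonoid R] [PartialOrder R] [IsOrderedAddMonoid R]
    (h : ℕ → R) (hh : ∀ l, 0 ≤ h l) (n x : ℕ) :
    ∑ y ∈ Icc 1 n, (if x ≤ y then h (y - x) else 0) ≤ ∑ l ∈ range (n + 1), h l := by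
  rw [← sum_filter, ← sum_image (g := (· - x)) fun y hy y' hy' hyy' => by
    simp only [coe_filter, mem_Icc, Set.mem_ofPred_eq] at hy hy' hyy'; omega]
  exact sum_le_sum_of_subset_of_nonneg (fun l hl => by simp at hl ⊢; omega) fun l _ _ => hh l

lemma sum_range_add_one_mul_le {β : ℕ → ℝ} (hβ : ∀ l, 0 ≤ β l) (n : ℕ) :
    ∑ l ∈ range (n + 1), ((l : ℝ) + 1) * β l ≤ β 0 + 2 * ∑ l ∈ range (n + 1), (l : ℝ) * β l := by
  calc _ ≤ ∑ l ∈ range (n + 1), ((if l = 0 then β 0 else 0) + 2 * ((l : ℝ) * β l)) := by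
        refine sum_le_sum fun l _ => ?_
        rcases l with _ | l
        · simp
        · push_cast
          nlinarith [hβ (l + 1), (l.cast_nonneg : (0 : ℝ) ≤ l)]
    _ = _ := by rw [sum_add_distrib, Finset.sum_ite_eq', mul_sum]; simp

section GapKernel

variable (β : ℕ → ℝ)

def gapKernel (x y z w : ℕ) : ℝ :=
  if x ≤ y ∧ z ≤ w ∧ w - z ≤ y - x then β (y - x) else 0

variable {β} (hβ : ∀ l, 0 ≤ β l)
include hβ

lemma gapKernel_nonneg (x y z w : ℕ) : 0 ≤ gapKernel β x y z w := by
  unfold gapKernel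
  split_ifs
  exacts [hβ _, le_rfl]

lemma sum_gapKernel_le (n x y z : ℕ) :
    ∑ w ∈ Icc 1 n, gapKernel β x y z w ≤
      if x ≤ y then ((y - x : ℕ) + 1 : ℝ) * β (y - x) else 0 := by
  unfold gapKernel
  split_ifs with hxy
  · rw [← sum_filter, sum_const, nsmul_eq_mul]
    refine mul_le_mul_of_nonneg_right ?_ (hβ _)
    have hsub : {w ∈ Icc 1 n | x ≤ y ∧ z ≤ w ∧ w - z ≤ y - x} ⊆ Icc z (z + (y - x)) :=
      fun w hw => by simp only [mem_filter, mem_Icc] at hw ⊢; omega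
    have := card_le_card hsub
    rw [Nat.card_Icc, show z + (y - x) + 1 - z = y - x + 1 by omega] at this
    exact_mod_cast this
  · simp [hxy]

end GapKernel

lemma sum_product_gapKernel_le {β : ℕ → ℝ} (hβ : ∀ l, 0 ≤ β l) (n : ℕ) :
    ∑ p ∈ Icc 1 n ×ˢ Icc 1 n ×ˢ Icc 1 n ×ˢ Icc 1 n, gapKernel β p.1 p.2.1 p.2.2.1 p.2.2.2 ≤
      n ^ 2 * ∑ l ∈ range (n + 1), ((l : ℝ) + 1) * β l := by
  simp only [sum_product]
  calc _ ≤ ∑ x ∈ Icc 1 n, ∑ y ∈ Icc 1 n, ∑ _z ∈ Icc 1 n,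
          if x ≤ y then ((y - x : ℕ) + 1 : ℝ) * β (y - x) else 0 :=
        sum_le_sum fun x _ => sum_le_sum fun y _ => sum_le_sum fun z _ =>
          sum_gapKernel_le hβ n x y z
    _ = ∑ x ∈ Icc 1 n, (n : ℝ) * ∑ y ∈ Icc 1 n,
          if x ≤ y then ((y - x : ℕ) + 1 : ℝ) * β (y - x) else 0 := by
        simp only [sum_const, Nat.card_Icc, add_tsub_cancel_right, nsmul_eq_mul, mul_sum]
    _ ≤ ∑ _x ∈ Icc 1 n, (n : ℝ) * ∑ l ∈ range (n + 1), ((l : ℝ) + 1) * β l := by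
        gcongr with x
        exact sum_Icc_ite_sub_le _ (fun l => mul_nonneg l.cast_add_one_pos.le (hβ l)) n x
    _ = _ := by simp [sum_const, sq, mul_assoc]

lemma beta_maxGap_le_sum_gapKernel {β : ℕ → ℝ} (hβ : ∀ l, 0 ≤ β l) {N : ℕ} (hN : 4 ≤ N)
    (i : Fin N → ℕ) :
    β (maxGap i) ≤ ∑ e : Fin 4 ↪ Fin N, gapKernel β (i (e 0)) (i (e 1)) (i (e 2)) (i (e 3)) := by
  obtain ⟨e, h01, h23, hle, hgap⟩ := exists_embedding_maxGap_eq hN i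
  calc β (maxGap i) = gapKernel β (i (e 0)) (i (e 1)) (i (e 2)) (i (e 3)) := by
        rw [gapKernel, if_pos ⟨h01, h23, hle⟩, hgap]
    _ ≤ _ := by
        apply single_le_sum (fun e _ => gapKernel_nonneg hβ _ _ _ _) (mem_univ e)

lemma sum_beta_maxGap_le {β : ℕ → ℝ} (hβ : ∀ l, 0 ≤ β l) {N : ℕ} (hN : 4 ≤ N) (n : ℕ) :
    ∑ i ∈ piFinset (fun _ : Fin N => Icc 1 n), β (maxGap i) ≤
      Fintype.card (Fin 4 ↪ Fin N) * (n ^ (N - 2) * ∑ l ∈ range (n + 1), ((l : ℝ) + 1) * β l) := by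
  have hfiber (e : Fin 4 ↪ Fin N) (i i' : Fin N → ℕ)
      (h : (i (e 0), i (e 1), i (e 2), i (e 3)) = (i' (e 0), i' (e 1), i' (e 2), i' (e 3))) :
      ∀ x ∈ univ.map e, i x = i' x := by
    simp only [Prod.mk.injEq] at h
    intro x hx
    obtain ⟨j, -, rfl⟩ := mem_map.1 hx
    fin_cases j <;> simp [h]
  have hmaps (e : Fin 4 ↪ Fin N) : ∀ i ∈ piFinset (fun _ : Fin N => Icc 1 n),
      (i (e 0), i (e 1), i (e 2), i (e 3)) ∈ Icc 1 n ×ˢ Icc 1 n ×ˢ Icc 1 n ×ˢ Icc 1 n := by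
    intro i hi
    simp only [mem_piFinset] at hi
    simp only [mem_product, hi, and_self]
  calc _ ≤ ∑ i ∈ piFinset (fun _ : Fin N => Icc 1 n), ∑ e : Fin 4 ↪ Fin N,
          gapKernel β (i (e 0)) (i (e 1)) (i (e 2)) (i (e 3)) :=
        sum_le_sum fun i _ => beta_maxGap_le_sum_gapKernel hβ hN i
    _ = ∑ e : Fin 4 ↪ Fin N, ∑ i ∈ piFinset (fun _ : Fin N => Icc 1 n),
          gapKernel β (i (e 0)) (i (e 1)) (i (e 2)) (i (e 3)) := sum_comm
    _ ≤ ∑ _e : Fin 4 ↪ Fin N, (n : ℝ) ^ (N - 4) *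
          (n ^ 2 * ∑ l ∈ range (n + 1), ((l : ℝ) + 1) * β l) := by
        refine sum_le_sum fun e _ => ?_
        have := sum_piFinset_comp_le (Icc 1 n) (univ.map e) _ (hfiber e) _ (hmaps e)
          (fun p => gapKernel β p.1 p.2.1 p.2.2.1 p.2.2.2) fun p => gapKernel_nonneg hβ _ _ _ _
        simp only [card_map, card_univ, Fintype.card_fin, Nat.card_Icc, add_tsub_cancel_right,
          nsmul_eq_mul, Nat.cast_pow] at this
        exact this.trans (by gcongr; exact sum_product_gapKernel_le hβ n)
    _ = _ := by
        rw [sum_const, card_univ, nsmul_eq_mul, ← mul_assoc ((n : ℝ) ^ (N - 4)), ← pow_add,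
          show N - 4 + 2 = N - 2 by omega]

theorem stmt6_general {Ω : Type*} [MeasurableSpace Ω] (μ : Measure Ω)
    (X : ℕ → Ω → ℝ) (k : ℕ) (hk : 2 ≤ k) (g : (Fin k → ℝ) → ℝ)
    (β : ℕ → ℝ) (hβ0 : ∀ l, 0 ≤ β l) (C : ℝ) (γ : ℝ) (hγ : 0 ≤ γ) (K : ℝ)
    (hcov : ∀ i : Fin (k + k) → ℕ,
      |∫ ω, g (fun a => X (i (Fin.castAdd k a)) ω) *
          g (fun a => X (i (Fin.natAdd k a)) ω) ∂μ| ≤ C * β (maxGap i))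
    (hsum : ∀ n : ℕ, ∑ l ∈ Finset.range (n + 1), (l : ℝ) * β l ≤ K * (n : ℝ) ^ γ) :
    ∃ C' : ℝ, ∀ n : ℕ, 1 ≤ n →
      ∑ i ∈ Fintype.piFinset (fun _ : Fin (k + k) => Finset.Icc 1 n),
          |∫ ω, g (fun a => X (i (Fin.castAdd k a)) ω) *
              g (fun a => X (i (Fin.natAdd k a)) ω) ∂μ|
        ≤ C' * (n : ℝ) ^ ((2 * k - 2 : ℝ) + γ) := by
  refine ⟨|C| * Fintype.card (Fin 4 ↪ Fin (k + k)) * (β 0 + 2 * K), fun n hn => ?_⟩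
  have hnγ : 1 ≤ (n : ℝ) ^ γ := Real.one_le_rpow (by exact_mod_cast hn) hγ
  have hpow : (n : ℝ) ^ ((2 * k - 2 : ℝ) + γ) = n ^ (k + k - 2) * n ^ γ := by
    rw [Real.rpow_add (by positivity), ← Real.rpow_natCast, Nat.cast_sub (by omega)]
    push_cast
    ring_nf
  have hseries : ∑ l ∈ range (n + 1), ((l : ℝ) + 1) * β l ≤ (β 0 + 2 * K) * n ^ γ :=
    (sum_range_add_one_mul_le hβ0 n).trans (by nlinarith [hsum n, hβ0 0])
  calc _ ≤ ∑ i ∈ piFinset (fun _ : Fin (k + k) => Icc 1 n), |C| * β (maxGap i) :=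
        sum_le_sum fun i _ => (hcov i).trans (by gcongr; exacts [hβ0 _, le_abs_self C])
    _ = |C| * ∑ i ∈ piFinset (fun _ : Fin (k + k) => Icc 1 n), β (maxGap i) := (mul_sum ..).symm
    _ ≤ |C| * (Fintype.card (Fin 4 ↪ Fin (k + k)) *
          (n ^ (k + k - 2) * ((β 0 + 2 * K) * n ^ γ))) := by
        gcongr
        exact (sum_beta_maxGap_le hβ0 (by omega) n).trans (by gcongr)
    _ = _ := by rw [hpow]; ring

/-- If the covariances of the degenerate kernel `g_k` are bounded by `C·β(l)` in terms of the
gap `l` of the index tuple, and `Σ_{l ≤ n} l·β(l) ≤ K·n^γ`, then the full covariance sum over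
all index tuples in `{1,...,n}` is `O(n^{2k-2+γ})`. -/
theorem stmt6 {Ω : Type*} [MeasurableSpace Ω] (μ : Measure Ω) [IsProbabilityMeasure μ]
    (X : ℕ → Ω → ℝ) (k : ℕ) (hk : 2 ≤ k) (g : (Fin k → ℝ) → ℝ)
    (hXmeas : ∀ i, Measurable (X i)) (hgmeas : Measurable g)
    (hint : ∀ i : Fin (k + k) → ℕ,
      Integrable (fun ω => g (fun a => X (i (Fin.castAdd k a)) ω) *
        g (fun a => X (i (Fin.natAdd k a)) ω)) μ)
    (β : ℕ → ℝ) (hβ0 : ∀ l, 0 ≤ β l) (C : ℝ) (γ : ℝ) (hγ : 0 ≤ γ) (K : ℝ)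
    (hcov : ∀ i : Fin (k + k) → ℕ,
      |∫ ω, g (fun a => X (i (Fin.castAdd k a)) ω) *
          g (fun a => X (i (Fin.natAdd k a)) ω) ∂μ| ≤ C * β (maxGap i))
    (hsum : ∀ n : ℕ, ∑ l ∈ Finset.range (n + 1), (l : ℝ) * β l ≤ K * (n : ℝ) ^ γ) :
    ∃ C' : ℝ, ∀ n : ℕ, 1 ≤ n →
      ∑ i ∈ Fintype.piFinset (fun _ : Fin (k + k) => Finset.Icc 1 n),
          |∫ ω, g (fun a => X (i (Fin.castAdd k a)) ω) *
              g (fun a => X (i (Fin.natAdd k a)) ω) ∂μ|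
        ≤ C' * (n : ℝ) ^ ((2 * k - 2 : ℝ) + γ) :=
  stmt6_general μ X k hk g β hβ0 C γ hγ K hcov hsum
end

section
/- Let h: ℝ^m → ℝ be Lipschitz with constant L̃ and suppose h(X₁',...,X_m') (for independent X_i') has density h_F with sup h_F ≤ M. Let J: [0,1] → ℝ be bounded with C := ∫_{−∞}^{∞} |J(H_F(y))| dy < ∞. Then the kernel A₁(x₁,...,x_m) = ∫_{−∞}^{∞} (1[h(x₁,...,x_m) ≤ y] − H_F(y)) J(H_F(y)) dy satisfies the variation condition: E[sup_{‖(x₁,...,x_m)−(X₁',...,X_m')‖ ≤ ε} |A₁(x₁,...,x_m) − A₁(X₁',...,X_m')|] ≤ C · 2 M L̃ · ε for all ε > 0. -/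
/-!
If `dist x X ≤ ε`, then `|h x - h X| ≤ a := L̃ ε`, and the indicators `1[h x ≤ y]` and
`1[h X ≤ y]` can differ only for `y` within distance `a` of `h X`. So the supremum in the
variation condition is at most `G (h X)`, where `G t = ∫_{|y - t| ≤ a} |J (H_F y)| dy`.
By Tonelli, `∫ G = 2 a C` against Lebesgue measure, and since the law of `h X` has density
at most `M`, `E[G (h X)] ≤ M · 2 a C`.
-/

open MeasureTheory ProbabilityTheory

open Metric Set Filter
open scoped ENNReal

lemma abs_ind_sub_le_one (p : Prop) {c : ℝ} (hc : c ∈ Icc (0 : ℝ) 1) : |ind p - c| ≤ 1 := by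
  unfold ind
  split_ifs <;> rw [abs_le] <;> constructor <;> linarith [hc.1, hc.2]

lemma measurable_ind_le (t : ℝ) : Measurable fun y : ℝ => ind (t ≤ y) :=
  Measurable.ite measurableSet_Ici measurable_const measurable_const

lemma abs_ind_le_sub_ind_le_mul_le_indicator {s t a : ℝ} (hst : |s - t| ≤ a) (f : ℝ → ℝ)
    (y : ℝ) : |(ind (s ≤ y) - ind (t ≤ y)) * f y| ≤ (closedBall t a).indicator (|f ·|) y := by
  rw [abs_mul]
  by_cases hy : y ∈ closedBall t a
  · rw [indicator_of_mem hy]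
    have : |ind (s ≤ y) - ind (t ≤ y)| ≤ 1 := by unfold ind; split_ifs <;> norm_num
    exact mul_le_of_le_one_left (abs_nonneg _) this
  · rw [indicator_of_notMem hy]
    rw [Real.closedBall_eq_Icc, mem_Icc, not_and_or, not_le, not_le] at hy
    have hst' := abs_le.mp hst
    have hsame : s ≤ y ↔ t ≤ y := by
      rcases hy with hy | hy <;> constructor <;> intro <;> linarith
    simp [ind, hsame]

noncomputable def lKernel (H J : ℝ → ℝ) (t : ℝ) : ℝ := ∫ y, (ind (t ≤ y) - H y) * J (H y)

lemma aestronglyMeasurable_of_aestronglyMeasurable_mul {α : Type*} [MeasurableSpace α]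
    {μ : Measure α} {g f : α → ℝ} (hg : Measurable g)
    (hgf : AEStronglyMeasurable (fun x => g x * f x) μ)
    (hf : Measurable ({x | g x = 0}.indicator f)) : AEStronglyMeasurable f μ := by
  have : f = fun x => (g x)⁻¹ * (g x * f x) + {x | g x = 0}.indicator f x := by
    funext x
    by_cases hx : g x = 0 <;> simp [hx]
  rw [this]
  exact (hg.inv.aestronglyMeasurable.mul hgf).add hf.aestronglyMeasurable

lemma lKernel_eq_zero_of_not_aestronglyMeasurable {H J : ℝ → ℝ} (hH : Measurable H)
    (hJH : ¬ AEStronglyMeasurable (fun y => J (H y))) (t : ℝ) : lKernel H J t = 0 := by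
  have hg : Measurable fun y => ind (t ≤ y) - H y := (measurable_ind_le t).sub hH
  refine integral_undef fun hint => hJH ?_
  refine aestronglyMeasurable_of_aestronglyMeasurable_mul hg hint.1 ?_
  -- where `H y = ind (t ≤ y)`, the factor `J (H y)` takes one of the two values `J 0`, `J 1`
  have : {y | ind (t ≤ y) - H y = 0}.indicator (fun y => J (H y)) =
      {y | ind (t ≤ y) - H y = 0}.indicator (fun y => J (ind (t ≤ y))) :=
    indicator_congr fun y hy => by rw [sub_eq_zero.mp hy]
  rw [this]
  refine Measurable.indicator ?_ (hg (measurableSet_singleton 0))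
  simp only [ind, apply_ite J]
  exact Measurable.ite measurableSet_Ici measurable_const measurable_const

lemma abs_lKernel_sub_le {H J : ℝ → ℝ} (hH : Measurable H) (hH01 : ∀ y, H y ∈ Icc (0 : ℝ) 1)
    (hJH : Integrable fun y => |J (H y)|) {s t a : ℝ} (hst : |s - t| ≤ a) :
    |lKernel H J s - lKernel H J t| ≤ ∫ y in closedBall t a, |J (H y)| := by
  by_cases hm : AEStronglyMeasurable (fun y => J (H y))
  swap
  -- then every integral defining the kernel takes the junk value `0`
  · simp only [lKernel_eq_zero_of_not_aestronglyMeasurable hH hm, sub_zero, abs_zero]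
    exact setIntegral_nonneg measurableSet_closedBall fun y _ => abs_nonneg _
  have hint : Integrable fun y => J (H y) := (integrable_norm_iff hm).mp hJH
  have hint_mul (u : ℝ) : Integrable fun y => (ind (u ≤ y) - H y) * J (H y) :=
    hint.bdd_mul ((measurable_ind_le u).sub hH).aestronglyMeasurable
      (Eventually.of_forall fun y => abs_ind_sub_le_one _ (hH01 y))
  rw [lKernel, lKernel, ← integral_sub (hint_mul s) (hint_mul t),
    ← integral_indicator measurableSet_closedBall]
  refine norm_integral_le_of_norm_le (G := ℝ) (hJH.indicator measurableSet_closedBall)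
    (Eventually.of_forall fun y => ?_)
  rw [Real.norm_eq_abs]
  convert abs_ind_le_sub_ind_le_mul_le_indicator hst (fun y => J (H y)) y using 2
  ring

lemma iSup_abs_lKernel_sub_le {E : Type*} [PseudoMetricSpace E] {h : E → ℝ} {L : NNReal}
    (hlip : LipschitzWith L h) {H J : ℝ → ℝ} (hH : Measurable H) (hH01 : ∀ y, H y ∈ Icc (0 : ℝ) 1)
    (hJH : Integrable fun y => |J (H y)|) (x₀ : E) {ε : ℝ} (hε : 0 ≤ ε) :
    ⨆ x : {x // dist x x₀ ≤ ε}, |lKernel H J (h x) - lKernel H J (h x₀)| ≤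
      ∫ y in closedBall (h x₀) (L * ε), |J (H y)| := by
  have : Nonempty {x // dist x x₀ ≤ ε} := ⟨⟨x₀, by simp [hε]⟩⟩
  refine ciSup_le fun x => abs_lKernel_sub_le hH hH01 hJH ?_
  calc |h x - h x₀| = dist (h x) (h x₀) := (Real.dist_eq _ _).symm
    _ ≤ L * dist x.1 x₀ := hlip.dist_le_mul _ _
    _ ≤ L * ε := mul_le_mul_of_nonneg_left x.2 L.2

lemma monotone_toReal_measure_le {Ω : Type*} [MeasurableSpace Ω] (μ : Measure Ω)
    [IsFiniteMeasure μ] (f : Ω → ℝ) : Monotone fun t => (μ {ω | f ω ≤ t}).toReal :=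
  fun _ _ hst => ENNReal.toReal_mono (measure_ne_top μ _)
    (measure_mono fun _ hω => le_trans hω hst)

lemma continuous_setIntegral_closedBall {f : ℝ → ℝ} (hf : Integrable f) {a : ℝ} (ha : 0 ≤ a) :
    Continuous fun t => ∫ y in closedBall t a, f y := by
  have hprim : Continuous fun b => ∫ y in (0)..b, f y :=
    intervalIntegral.continuous_primitive (fun _ _ => hf.intervalIntegrable) 0
  have : (fun t => ∫ y in closedBall t a, f y) =
      fun t => (∫ y in (0)..(t + a), f y) - ∫ y in (0)..(t - a), f y := by
    funext t
    rw [Real.closedBall_eq_Icc, integral_Icc_eq_integral_Ioc,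
      ← intervalIntegral.integral_of_le (by linarith),
      intervalIntegral.integral_interval_sub_left hf.intervalIntegrable hf.intervalIntegrable]
  rw [this]
  exact (hprim.comp (continuous_add_const a)).sub (hprim.comp (continuous_sub_right a))

lemma lintegral_setLIntegral_closedBall {f : ℝ → ℝ≥0∞} (hf : AEMeasurable f) (a : ℝ) :
    ∫⁻ t, ∫⁻ y in closedBall t a, f y = ENNReal.ofReal (2 * a) * ∫⁻ y, f y := by
  have hmeas : AEMeasurable (Function.uncurry fun t y => (closedBall t a).indicator f y)
      (volume.prod volume) := by
    have : (Function.uncurry fun t y => (closedBall t a).indicator f y) =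
        {p : ℝ × ℝ | dist p.2 p.1 ≤ a}.indicator (fun p => f p.2) := rfl
    rw [this]
    exact (hf.comp_quasiMeasurePreserving Measure.quasiMeasurePreserving_snd).indicator
      (measurableSet_le (measurable_snd.dist measurable_fst) measurable_const)
  calc ∫⁻ t, ∫⁻ y in closedBall t a, f y = ∫⁻ t, ∫⁻ y, (closedBall t a).indicator f y := by
        simp_rw [lintegral_indicator measurableSet_closedBall]
    _ = ∫⁻ y, ∫⁻ t, (closedBall t a).indicator f y := lintegral_lintegral_swap hmeas
    _ = ∫⁻ y, f y * volume (closedBall y a) := by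
        refine lintegral_congr fun y => ?_
        rw [← setLIntegral_const, ← lintegral_indicator measurableSet_closedBall]
        congr with t
        by_cases ht : t ∈ closedBall y a
        · simp [ht, mem_closedBall_comm.mp ht]
        · simp [ht, mt mem_closedBall_comm.mp ht]
    _ = ENNReal.ofReal (2 * a) * ∫⁻ y, f y := by
        simp_rw [Real.volume_closedBall]
        rw [lintegral_mul_const' _ _ ENNReal.ofReal_ne_top, mul_comm]

lemma lintegral_withDensity_ofReal_le {α : Type*} [MeasurableSpace α] {μ : Measure α}
    {ρ : α → ℝ} {M : ℝ} (hρ : ∀ x, ρ x ≤ M) (g : α → ℝ≥0∞) :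
    ∫⁻ x, g x ∂μ.withDensity (fun x => ENNReal.ofReal (ρ x)) ≤
      ENNReal.ofReal M * ∫⁻ x, g x ∂μ := by
  calc _ ≤ ∫⁻ x, g x ∂μ.withDensity (fun _ => ENNReal.ofReal M) :=
        lintegral_mono' (withDensity_mono (ae_of_all _ fun x => ENNReal.ofReal_le_ofReal (hρ x)))
          le_rfl
    _ = _ := by rw [withDensity_const, lintegral_smul_measure, smul_eq_mul]

lemma lintegral_withDensity_setIntegral_closedBall_le {f ρ : ℝ → ℝ} {M : ℝ} (hf : Integrable f)
    (hf0 : ∀ y, 0 ≤ f y) (hρ : ∀ x, ρ x ≤ M) (a : ℝ) :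
    ∫⁻ t, ENNReal.ofReal (∫ y in closedBall t a, f y)
        ∂volume.withDensity (fun x => ENNReal.ofReal (ρ x)) ≤
      ENNReal.ofReal M * (ENNReal.ofReal (2 * a) * ENNReal.ofReal (∫ y, f y)) := by
  refine (lintegral_withDensity_ofReal_le hρ _).trans_eq ?_
  have hf0' : 0 ≤ᵐ[volume] f := ae_of_all _ hf0
  simp_rw [ofReal_integral_eq_lintegral_ofReal hf.integrableOn (ae_restrict_of_ae hf0'),
    ofReal_integral_eq_lintegral_ofReal hf hf0']
  rw [lintegral_setLIntegral_closedBall hf.aemeasurable.ennreal_ofReal]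

theorem stmt11_general {m : ℕ} {Ω : Type*} [MeasurableSpace Ω] (μ : Measure Ω) [IsProbabilityMeasure μ]
    (h : EuclideanSpace ℝ (Fin m) → ℝ) (Ltilde : NNReal) (hlip : LipschitzWith Ltilde h)
    (X : Ω → EuclideanSpace ℝ (Fin m))
    (hX : ∀ i, Measurable fun ω => X ω i)
    -- `h(X)` has bounded density `h_F`, with distribution function `H_F`
    (h_F : ℝ → ℝ) (M : ℝ) (hFnonneg : ∀ x, 0 ≤ h_F x) (hFbdd : ∀ x, h_F x ≤ M)
    (hdens : μ.map (fun ω => h (X ω)) =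
      MeasureTheory.volume.withDensity (fun x => ENNReal.ofReal (h_F x)))
    (H_F : ℝ → ℝ) (hHF : ∀ y, H_F y = (μ {ω | h (X ω) ≤ y}).toReal)
    -- `J` is bounded with `C = ∫ |J(H_F(y))| dy < ∞`
    (J : ℝ → ℝ)
    (hJint : Integrable (fun y => |J (H_F y)|))
    (C : ℝ) (hC : C = ∫ y : ℝ, |J (H_F y)|)
    -- the kernel `A₁`
    (A₁ : EuclideanSpace ℝ (Fin m) → ℝ)
    (hA₁ : ∀ x, A₁ x = ∫ y : ℝ, (ind (h x ≤ y) - H_F y) * J (H_F y)) :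
    ∀ ε : ℝ, 0 < ε →
      ∫ ω, (⨆ x : {x : EuclideanSpace ℝ (Fin m) // dist x (X ω) ≤ ε},
          |A₁ x.1 - A₁ (X ω)|) ∂μ ≤ C * (2 * M * (Ltilde : ℝ)) * ε := by
  intro ε hε
  obtain rfl : A₁ = fun x => lKernel H_F J (h x) := funext hA₁
  have hH01 (y : ℝ) : H_F y ∈ Icc (0 : ℝ) 1 := hHF y ▸ ⟨ENNReal.toReal_nonneg, measureReal_le_one⟩
  have hHmeas : Measurable H_F := by
    simpa only [← hHF] using (monotone_toReal_measure_le μ fun ω => h (X ω)).measurable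
  set a := (Ltilde : ℝ) * ε with ha
  set G := fun t => ∫ y in closedBall t a, |J (H_F y)|
  have hsup (ω : Ω) : ‖⨆ x : {x : EuclideanSpace ℝ (Fin m) // dist x (X ω) ≤ ε},
      |lKernel H_F J (h x) - lKernel H_F J (h (X ω))|‖ₑ ≤ ENNReal.ofReal (G (h (X ω))) := by
    rw [Real.enorm_of_nonneg (Real.iSup_nonneg fun _ => abs_nonneg _)]
    exact ENNReal.ofReal_le_ofReal (iSup_abs_lKernel_sub_le hlip hHmeas hH01 hJint (X ω) hε.le)
  have hGmeas : Measurable G :=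
    (continuous_setIntegral_closedBall hJint (by positivity)).measurable
  have hhX : Measurable fun ω => h (X ω) :=
    hlip.continuous.measurable.comp
      ((WithLp.measurable_toLp 2 _).comp (measurable_pi_lambda (fun ω i => X ω i) hX))
  have hM : 0 ≤ M := (hFnonneg 0).trans (hFbdd 0)
  have hC0 : 0 ≤ C := hC ▸ integral_nonneg fun y => abs_nonneg _
  rw [← ENNReal.ofReal_le_ofReal_iff (by positivity)]
  calc ENNReal.ofReal (∫ ω, ⨆ x : {x // dist x (X ω) ≤ ε},
        |lKernel H_F J (h x) - lKernel H_F J (h (X ω))| ∂μ)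
      ≤ ∫⁻ ω, ENNReal.ofReal (G (h (X ω))) ∂μ := by
        refine (ENNReal.ofReal_le_ofReal (le_abs_self _)).trans ?_
        rw [← Real.enorm_eq_ofReal_abs]
        exact (enorm_integral_le_lintegral_enorm _).trans (lintegral_mono hsup)
    _ = ∫⁻ t, ENNReal.ofReal (G t) ∂volume.withDensity (fun x => ENNReal.ofReal (h_F x)) := by
        rw [← hdens, lintegral_map hGmeas.ennreal_ofReal hhX]
    _ ≤ ENNReal.ofReal M * (ENNReal.ofReal (2 * a) * ENNReal.ofReal C) := by
        rw [hC]
        exact lintegral_withDensity_setIntegral_closedBall_le hJint (fun _ => abs_nonneg _) hFbdd a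
    _ = ENNReal.ofReal (C * (2 * M * Ltilde) * ε) := by
        rw [← ENNReal.ofReal_mul (by positivity), ← ENNReal.ofReal_mul hM, ha]
        ring_nf

/-- The kernel `A₁(x) = ∫ (1[h(x) ≤ y] − H_F(y)) J(H_F(y)) dy` built from a Lipschitz kernel
`h` whose value has a bounded density satisfies the variation condition with constant
`C · 2 M Ltilde`, where `C = ∫ |J(H_F(y))| dy`. -/
theorem stmt11 {m : ℕ} {Ω : Type*} [MeasurableSpace Ω] (μ : Measure Ω) [IsProbabilityMeasure μ]
    (h : EuclideanSpace ℝ (Fin m) → ℝ) (Ltilde : NNReal) (hlip : LipschitzWith Ltilde h)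
    (X : Ω → EuclideanSpace ℝ (Fin m))
    (hX : ∀ i, Measurable fun ω => X ω i)
    (hind : iIndepFun (fun i ω => X ω i) μ)
    -- `h(X)` has bounded density `h_F`, with distribution function `H_F`
    (h_F : ℝ → ℝ) (M : ℝ) (hFnonneg : ∀ x, 0 ≤ h_F x) (hFbdd : ∀ x, h_F x ≤ M)
    (hdens : μ.map (fun ω => h (X ω)) =
      MeasureTheory.volume.withDensity (fun x => ENNReal.ofReal (h_F x)))
    (H_F : ℝ → ℝ) (hHF : ∀ y, H_F y = (μ {ω | h (X ω) ≤ y}).toReal)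
    -- `J` is bounded with `C = ∫ |J(H_F(y))| dy < ∞`
    (J : ℝ → ℝ) (MJ : ℝ) (hJbdd : ∀ u, |J u| ≤ MJ)
    (hJint : Integrable (fun y => |J (H_F y)|))
    (C : ℝ) (hC : C = ∫ y : ℝ, |J (H_F y)|)
    -- the kernel `A₁`
    (A₁ : EuclideanSpace ℝ (Fin m) → ℝ)
    (hA₁ : ∀ x, A₁ x = ∫ y : ℝ, (ind (h x ≤ y) - H_F y) * J (H_F y)) :
    ∀ ε : ℝ, 0 < ε →
      ∫ ω, (⨆ x : {x : EuclideanSpace ℝ (Fin m) // dist x (X ω) ≤ ε},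
          |A₁ x.1 - A₁ (X ω)|) ∂μ ≤ C * (2 * M * (Ltilde : ℝ)) * ε :=
  stmt11_general μ h Ltilde hlip X hX h_F M hFnonneg hFbdd hdens H_F hHF J hJint C hC A₁ hA₁
end

section
/- Suppose random variables ξ̂_p, and processes Z_n(t), V_n(t) satisfy: (a) {√n(ξ̂_p − ξ_p) ≤ t} = {Z_n(t) ≤ V_n(t)} for all t and n; (b) V_n(t) → t in probability for every fixed t; (c) Z_n(t) − Z_n(0) → 0 in probability for every fixed t. Then for every t ∈ ℝ and ε > 0, P(√n(ξ̂_p − ξ_p) ≤ t, Z_n(0) ≥ t + ε) → 0 and P(√n(ξ̂_p − ξ_p) ≥ t, Z_n(0) ≤ t − ε) → 0 as n → ∞. -/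
open MeasureTheory Filter Topology

/-!
On `{√n(ξ̂_p − ξ_p) ≤ t, Z_n(0) ≥ t + ε}` we have `Z_n(t) ≤ V_n(t)` by (a), so
`ε ≤ (Z_n(0) − Z_n(t)) + (V_n(t) − t)`: either `Z_n(t)` is `ε/2`-far from `Z_n(0)` or `V_n(t)`
is `ε/2`-far from `t`, and both events have vanishing probability by (b) and (c). The second
limit is the same argument at the level `t − ε/2`, where (a) gives `V_n(t − ε/2) < Z_n(t − ε/2)`.
-/

theorem half_le_abs_sub_or_half_le_abs_sub {a b c d ε : ℝ} (hab : a ≤ b) (hcd : c + ε ≤ d) :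
    ε / 2 ≤ |a - d| ∨ ε / 2 ≤ |b - c| := by
  by_contra! h
  have had := (abs_lt.mp h.1).1
  have hbc := (abs_lt.mp h.2).2
  linarith

section TendstoInMeasure

variable {Ω ι E : Type*} [MeasurableSpace Ω] [PseudoMetricSpace E] {μ : Measure Ω} {l : Filter ι}

theorem tendsto_measure_of_subset_union {S A B : ι → Set Ω} (hS : ∀ i, S i ⊆ A i ∪ B i)
    (hA : Tendsto (fun i => μ (A i)) l (𝓝 0)) (hB : Tendsto (fun i => μ (B i)) l (𝓝 0)) :
    Tendsto (fun i => μ (S i)) l (𝓝 0) := by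
  have hAB : Tendsto (fun i => μ (A i) + μ (B i)) l (𝓝 0) := by simpa using hA.add hB
  exact tendsto_of_tendsto_of_tendsto_of_le_of_le tendsto_const_nhds hAB (fun _ => zero_le)
    fun i => (measure_mono (hS i)).trans (measure_union_le _ _)

theorem TendstoInMeasure.tendsto_measure_of_le_dist_or {f g : ι → Ω → E} {F G : Ω → E}
    (hf : TendstoInMeasure μ f l F) (hg : TendstoInMeasure μ g l G) {δ : ℝ} (hδ : 0 < δ)
    {S : ι → Set Ω} (hS : ∀ i, ∀ ω ∈ S i, δ ≤ dist (f i ω) (F ω) ∨ δ ≤ dist (g i ω) (G ω)) :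
    Tendsto (fun i => μ (S i)) l (𝓝 0) :=
  tendsto_measure_of_subset_union (fun i ω hω => hS i ω hω)
    (tendstoInMeasure_iff_dist.mp hf δ hδ) (tendstoInMeasure_iff_dist.mp hg δ hδ)

end TendstoInMeasure

theorem stmt15_general {Ω : Type*} [MeasurableSpace Ω] (μ : Measure Ω)
    (xihat : ℕ → Ω → ℝ) (ξp : ℝ) (Z V : ℕ → ℝ → Ω → ℝ)
    (ha : ∀ (n : ℕ) (t : ℝ),
      {ω | Real.sqrt n * (xihat n ω - ξp) ≤ t} = {ω | Z n t ω ≤ V n t ω})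
    (hb : ∀ t : ℝ, TendstoInMeasure μ (fun n => V n t) atTop (fun _ => t))
    (hc : ∀ t : ℝ, TendstoInMeasure μ (fun n ω => Z n t ω - Z n 0 ω) atTop (0 : Ω → ℝ)) :
    ∀ (t ε : ℝ), 0 < ε →
      Tendsto (fun n : ℕ =>
          μ ({ω | Real.sqrt n * (xihat n ω - ξp) ≤ t} ∩ {ω | t + ε ≤ Z n 0 ω}))
        atTop (nhds 0) ∧
      Tendsto (fun n : ℕ =>
          μ ({ω | t ≤ Real.sqrt n * (xihat n ω - ξp)} ∩ {ω | Z n 0 ω ≤ t - ε}))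
        atTop (nhds 0) := by
  intro t ε hε
  constructor
  · refine TendstoInMeasure.tendsto_measure_of_le_dist_or (hc t) (hb t) (half_pos hε) ?_
    rintro n ω ⟨hle, hZ⟩
    rw [ha n t] at hle
    simpa [Real.dist_eq] using half_le_abs_sub_or_half_le_abs_sub hle hZ
  · set s := t - ε / 2 with hs
    refine TendstoInMeasure.tendsto_measure_of_le_dist_or (hc s) (hb s)
      (by positivity : 0 < ε / 2 / 2) ?_
    rintro n ω ⟨hge : t ≤ _, hZ : Z n 0 ω ≤ t - ε⟩
    have hlt : ω ∉ {ω | Real.sqrt n * (xihat n ω - ξp) ≤ s} := fun h : _ ≤ s => by linarith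
    rw [ha n s, Set.mem_ofPred_eq, not_le] at hlt
    have hZs : Z n 0 ω + ε / 2 ≤ s := by linarith
    simpa [Real.dist_eq] using (half_le_abs_sub_or_half_le_abs_sub hlt.le hZs).symm

/-- The comparison step in the proof of the Bahadur representation: if
`{√n(ξ̂_p − ξ_p) ≤ t} = {Z_n(t) ≤ V_n(t)}`, `V_n(t) → t` in probability and
`Z_n(t) − Z_n(0) → 0` in probability, then
`P(√n(ξ̂_p − ξ_p) ≤ t, Z_n(0) ≥ t + ε) → 0` and
`P(√n(ξ̂_p − ξ_p) ≥ t, Z_n(0) ≤ t − ε) → 0`. -/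
theorem stmt15 {Ω : Type*} [MeasurableSpace Ω] (μ : Measure Ω) [IsProbabilityMeasure μ]
    (xihat : ℕ → Ω → ℝ) (ξp : ℝ) (Z V : ℕ → ℝ → Ω → ℝ)
    (ha : ∀ (n : ℕ) (t : ℝ),
      {ω | Real.sqrt n * (xihat n ω - ξp) ≤ t} = {ω | Z n t ω ≤ V n t ω})
    (hb : ∀ t : ℝ, TendstoInMeasure μ (fun n => V n t) atTop (fun _ => t))
    (hc : ∀ t : ℝ, TendstoInMeasure μ (fun n ω => Z n t ω - Z n 0 ω) atTop (0 : Ω → ℝ)) :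
    ∀ (t ε : ℝ), 0 < ε →
      Tendsto (fun n : ℕ =>
          μ ({ω | Real.sqrt n * (xihat n ω - ξp) ≤ t} ∩ {ω | t + ε ≤ Z n 0 ω}))
        atTop (nhds 0) ∧
      Tendsto (fun n : ℕ =>
          μ ({ω | t ≤ Real.sqrt n * (xihat n ω - ξp)} ∩ {ω | Z n 0 ω ≤ t - ε}))
        atTop (nhds 0) :=
  stmt15_general μ xihat ξp Z V ha hb hc
end

section
/- Let (Y_n) be real random variables and W_n real random variables such that for all t ∈ ℝ and ε > 0, P(Y_n ≤ t, W_n ≥ t + ε) → 0 and P(Y_n ≥ t + ε, W_n ≤ t) → 0 as n → ∞, and suppose (W_n) is tight. Then Y_n − W_n → 0 in probability. -/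
/-!
Split the real line by the grid `δℤ`, `δ = ε / 2`. If `|W_n| ≤ M` and `|Y_n - W_n| ≥ 2δ`, some cell
`[mδ, mδ + δ]` with `|mδ| ≤ M + 2δ` lies between `Y_n` and `W_n`. So `P(|Y_n - W_n| ≥ ε)` is at
most `P(|W_n| > M)` plus finitely many probabilities of the two kinds in the hypotheses, each of which
tends to `0`; tightness makes the first term uniformly small.
-/

open MeasureTheory Filter Topology

lemma exists_int_mul_mem_Ico {δ : ℝ} (hδ : 0 < δ) (c : ℝ) :
    ∃ m : ℤ, c ≤ m * δ ∧ m * δ < c + δ := by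
  obtain ⟨m, ⟨hcm, hmc⟩, -⟩ := existsUnique_add_zsmul_mem_Ico hδ 0 c
  rw [zero_add, zsmul_eq_mul] at hcm hmc
  exact ⟨m, hcm, hmc⟩

lemma mem_Icc_ceil_of_abs_mul_le {δ R : ℝ} (hδ : 0 < δ) {m : ℤ} (h : |m * δ| ≤ R) :
    m ∈ Finset.Icc (-⌈R / δ⌉) ⌈R / δ⌉ := by
  rw [abs_mul, abs_of_pos hδ, ← le_div_iff₀ hδ, ← Int.cast_abs] at h
  rw [Finset.mem_Icc, ← abs_le]
  exact_mod_cast h.trans (Int.le_ceil _)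

lemma exists_int_mul_separating {δ M y w : ℝ} (hδ : 0 < δ) (hw : |w| ≤ M)
    (hyw : 2 * δ ≤ |y - w|) :
    ∃ m ∈ Finset.Icc (-⌈(M + 2 * δ) / δ⌉) ⌈(M + 2 * δ) / δ⌉,
      (y ≤ m * δ ∧ m * δ + δ ≤ w) ∨ (m * δ + δ ≤ y ∧ w ≤ m * δ) := by
  obtain ⟨hwl, hwu⟩ := abs_le.mp hw
  rcases le_abs'.mp hyw with hlt | hgt
  · obtain ⟨m, hm, hm'⟩ := exists_int_mul_mem_Ico hδ (w - 2 * δ)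
    exact ⟨m, mem_Icc_ceil_of_abs_mul_le hδ (abs_le.mpr ⟨by linarith, by linarith⟩),
      Or.inl ⟨by linarith, by linarith⟩⟩
  · obtain ⟨m, hm, hm'⟩ := exists_int_mul_mem_Ico hδ w
    exact ⟨m, mem_Icc_ceil_of_abs_mul_le hδ (abs_le.mpr ⟨by linarith, by linarith⟩),
      Or.inr ⟨by linarith, by linarith⟩⟩

lemma measure_abs_sub_ge_le {Ω : Type*} [MeasurableSpace Ω] (μ : Measure Ω) (Y W : Ω → ℝ)
    {δ : ℝ} (hδ : 0 < δ) (M : ℝ) :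
    μ {ω | 2 * δ ≤ |Y ω - W ω|} ≤ μ {ω | M < |W ω|} +
      ∑ m ∈ Finset.Icc (-⌈(M + 2 * δ) / δ⌉) ⌈(M + 2 * δ) / δ⌉,
        (μ ({ω | Y ω ≤ m * δ} ∩ {ω | m * δ + δ ≤ W ω}) +
          μ ({ω | m * δ + δ ≤ Y ω} ∩ {ω | W ω ≤ m * δ})) := by
  set I := Finset.Icc (-⌈(M + 2 * δ) / δ⌉) ⌈(M + 2 * δ) / δ⌉
  have hcover : {ω | 2 * δ ≤ |Y ω - W ω|} ⊆ {ω | M < |W ω|} ∪ ⋃ m ∈ I,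
      (({ω | Y ω ≤ m * δ} ∩ {ω | m * δ + δ ≤ W ω}) ∪
        ({ω | m * δ + δ ≤ Y ω} ∩ {ω | W ω ≤ m * δ})) := by
    intro ω hω
    by_cases hW : M < |W ω|
    · exact Or.inl hW
    · obtain ⟨m, hm, hsep⟩ := exists_int_mul_separating hδ (not_lt.mp hW) hω
      exact Or.inr (Set.mem_biUnion hm hsep)
  calc _ ≤ _ := measure_mono hcover
    _ ≤ _ := measure_union_le _ _
    _ ≤ _ := add_le_add_right (measure_biUnion_finset_le _ _) _
    _ ≤ _ := add_le_add_right (Finset.sum_le_sum fun _ _ => measure_union_le _ _) _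

theorem stmt16_general {Ω : Type*} [MeasurableSpace Ω] (μ : Measure Ω)
    (Y W : ℕ → Ω → ℝ)
    (h1 : ∀ (t ε : ℝ), 0 < ε →
      Tendsto (fun n => μ ({ω | Y n ω ≤ t} ∩ {ω | t + ε ≤ W n ω})) atTop (nhds 0))
    (h2 : ∀ (t ε : ℝ), 0 < ε →
      Tendsto (fun n => μ ({ω | t + ε ≤ Y n ω} ∩ {ω | W n ω ≤ t})) atTop (nhds 0))
    (htight : ∀ η : ℝ, 0 < η → ∃ M : ℝ, ∀ n, μ {ω | M < |W n ω|} < ENNReal.ofReal η) :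
    TendstoInMeasure μ (fun n ω => Y n ω - W n ω) atTop (0 : Ω → ℝ) := by
  rw [tendstoInMeasure_iff_dist]
  intro ε hε
  refine ENNReal.tendsto_nhds_zero.mpr fun η hη => ?_
  obtain ⟨r, hr, hr0, hrη⟩ := ENNReal.lt_iff_exists_real_btwn.mp (ENNReal.half_pos hη.ne')
  obtain ⟨M, hM⟩ := htight r (ENNReal.ofReal_pos.mp hr0)
  set δ := ε / 2
  have hδ : 0 < δ := half_pos hε
  have hsum := tendsto_finsetSum (Finset.Icc (-⌈(M + 2 * δ) / δ⌉) ⌈(M + 2 * δ) / δ⌉)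
    fun m _ => (h1 (m * δ) δ hδ).add (h2 (m * δ) δ hδ)
  rw [add_zero, Finset.sum_const_zero] at hsum
  filter_upwards [ENNReal.tendsto_nhds_zero.mp hsum (η / 2) (ENNReal.half_pos hη.ne')] with n hn
  calc μ {ω | ε ≤ dist (Y n ω - W n ω) ((0 : Ω → ℝ) ω)}
      = μ {ω | 2 * δ ≤ |Y n ω - W n ω|} := by
        simp only [Pi.zero_apply, Real.dist_eq, sub_zero, δ, mul_div_cancel₀ ε two_ne_zero]
    _ ≤ _ := measure_abs_sub_ge_le μ (Y n) (W n) hδ M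
    _ ≤ η / 2 + η / 2 := add_le_add ((hM n).trans hrη).le hn
    _ = η := ENNReal.add_halves η

/-- A version of Lemma 1 of Ghosh (1971): if `P(Y_n ≤ t, W_n ≥ t + ε) → 0` and
`P(Y_n ≥ t + ε, W_n ≤ t) → 0` for all `t` and `ε > 0`, and `(W_n)` is tight, then
`Y_n − W_n → 0` in probability. -/
theorem stmt16 {Ω : Type*} [MeasurableSpace Ω] (μ : Measure Ω) [IsProbabilityMeasure μ]
    (Y W : ℕ → Ω → ℝ)
    (hmeasY : ∀ n, Measurable (Y n)) (hmeasW : ∀ n, Measurable (W n))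
    (h1 : ∀ (t ε : ℝ), 0 < ε →
      Tendsto (fun n => μ ({ω | Y n ω ≤ t} ∩ {ω | t + ε ≤ W n ω})) atTop (nhds 0))
    (h2 : ∀ (t ε : ℝ), 0 < ε →
      Tendsto (fun n => μ ({ω | t + ε ≤ Y n ω} ∩ {ω | W n ω ≤ t})) atTop (nhds 0))
    (htight : ∀ η : ℝ, 0 < η → ∃ M : ℝ, ∀ n, μ {ω | M < |W n ω|} < ENNReal.ofReal η) :
    TendstoInMeasure μ (fun n ω => Y n ω - W n ω) atTop (0 : Ω → ℝ) :=
  stmt16_general μ Y W h1 h2 htight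
end
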